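/- arXiv:2502.03673 — 6 statements merged into one kernel-verified Lean document; each statement's English description precedes it below -/
import Mathlib

section
/- For every integer r ≥ 1 and every integer t ≥ 2, r!/r^r ≤ ∏_{i=0}^{r-1} (1 - (t^i - 1)/(t^r - 1)). -/
lemma sum_pow_key (t r i : ℕ) (ht : 2 ≤ t) (hir : i ≤ r) :
    r * ∑ j ∈ Finset.range i, t ^ j ≤ i * ∑ j ∈ Finset.range r, t ^ j := by
  have hsplit : ∑ j ∈ Finset.range r, t ^ j =
      (∑ j ∈ Finset.range i, t ^ j) + ∑ j ∈ Finset.Ico i r, t ^ j :=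
    (Finset.sum_range_add_sum_Ico _ hir).symm
  have h1 : ∑ j ∈ Finset.range i, t ^ j ≤ i * t ^ i := by
    calc ∑ j ∈ Finset.range i, t ^ j ≤ ∑ _j ∈ Finset.range i, t ^ i :=
          Finset.sum_le_sum fun j hj =>
            Nat.pow_le_pow_right (by omega) (Finset.mem_range.mp hj).le
      _ = i * t ^ i := by simp [Finset.sum_const, Finset.card_range]
  have h2 : (r - i) * t ^ i ≤ ∑ j ∈ Finset.Ico i r, t ^ j := by
    calc (r - i) * t ^ i = ∑ _j ∈ Finset.Ico i r, t ^ i := by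
          simp [Finset.sum_const, Nat.card_Ico]
      _ ≤ ∑ j ∈ Finset.Ico i r, t ^ j :=
          Finset.sum_le_sum fun j hj =>
            Nat.pow_le_pow_right (by omega) (Finset.mem_Ico.mp hj).1
  have h3 : (r - i) * ∑ j ∈ Finset.range i, t ^ j ≤ i * ∑ j ∈ Finset.Ico i r, t ^ j :=
    calc (r - i) * ∑ j ∈ Finset.range i, t ^ j ≤ (r - i) * (i * t ^ i) :=
          Nat.mul_le_mul_left _ h1
      _ = i * ((r - i) * t ^ i) := by ring
      _ ≤ i * ∑ j ∈ Finset.Ico i r, t ^ j := Nat.mul_le_mul_left _ h2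
  calc r * ∑ j ∈ Finset.range i, t ^ j
      = i * (∑ j ∈ Finset.range i, t ^ j) + (r - i) * ∑ j ∈ Finset.range i, t ^ j := by
        rw [← Nat.add_mul, Nat.add_sub_cancel' hir]
    _ ≤ i * (∑ j ∈ Finset.range i, t ^ j) + i * ∑ j ∈ Finset.Ico i r, t ^ j :=
        Nat.add_le_add_left h3 _
    _ = i * ∑ j ∈ Finset.range r, t ^ j := by rw [hsplit, Nat.mul_add]

lemma key_real (t r i : ℕ) (ht : 2 ≤ t) (hir : i ≤ r) :
    (r : ℝ) * ((t : ℝ) ^ i - 1) ≤ (i : ℝ) * ((t : ℝ) ^ r - 1) := by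
  have hgs : ∀ n : ℕ, (t : ℝ) ^ n - 1 = (∑ j ∈ Finset.range n, (t : ℝ) ^ j) * ((t : ℝ) - 1) :=
    fun n => (geom_sum_mul (t : ℝ) n).symm
  rw [hgs i, hgs r, ← mul_assoc, ← mul_assoc]
  have ht1 : (0 : ℝ) ≤ (t : ℝ) - 1 := by
    have : (2:ℝ) ≤ t := by exact_mod_cast ht
    linarith
  apply mul_le_mul_of_nonneg_right _ ht1
  exact_mod_cast sum_pow_key t r i ht hir

theorem factorial_div_pow_le_prod (r t : ℕ) (hr : 1 ≤ r) (ht : 2 ≤ t) :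
    (Nat.factorial r : ℝ) / (r : ℝ) ^ r ≤
      ∏ i ∈ Finset.range r, (1 - ((t : ℝ) ^ i - 1) / ((t : ℝ) ^ r - 1)) := by
  have hrpos : (0:ℝ) < r := by exact_mod_cast hr
  have htr : (1:ℝ) < (t:ℝ) ^ r := by
    apply one_lt_pow₀ (by exact_mod_cast ht : (1:ℝ) < t) (by omega)
  have hden : (0:ℝ) < (t:ℝ) ^ r - 1 := by linarith
  have hfac : ((Nat.factorial r : ℝ)) = ∏ i ∈ Finset.range r, ((r : ℝ) - i) := by
    have : ∏ i ∈ Finset.range r, (r - i) = Nat.factorial r := by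
      rw [← Finset.prod_range_add_one_eq_factorial, ← Finset.prod_range_reflect]
      apply Finset.prod_congr rfl
      intro i hi
      have := Finset.mem_range.mp hi
      omega
    rw [← this]
    rw [Nat.cast_prod]
    exact Finset.prod_congr rfl fun i hi => Nat.cast_sub (Finset.mem_range.mp hi).le
  have step : ∀ i ∈ Finset.range r, ((r:ℝ) - i) / r ≤ 1 - ((t:ℝ)^i - 1)/((t:ℝ)^r - 1) := by
    intro i hi
    have hir : i ≤ r := (Finset.mem_range.mp hi).le
    have h1 : ((t:ℝ)^i - 1)/((t:ℝ)^r - 1) ≤ (i:ℝ)/r := by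
      rw [div_le_div_iff₀ hden hrpos]
      nlinarith [key_real t r i ht hir]
    have h2 : ((r:ℝ) - i)/r = 1 - (i:ℝ)/r := by field_simp
    rw [h2]; linarith
  calc (Nat.factorial r : ℝ) / (r : ℝ) ^ r
      = ∏ i ∈ Finset.range r, ((r:ℝ) - i) / r := by
        rw [Finset.prod_div_distrib, hfac, Finset.prod_const, Finset.card_range]
    _ ≤ ∏ i ∈ Finset.range r, (1 - ((t : ℝ) ^ i - 1) / ((t : ℝ) ^ r - 1)) := by
        apply Finset.prod_le_prod _ step
        intro i hi
        have hir : (i:ℝ) ≤ r := by exact_mod_cast (Finset.mem_range.mp hi).le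
        apply div_nonneg (by linarith) hrpos.le
end

section
/- Let r ≥ 2 and n ≥ r be integers, and let M be an n-element rank-r matroid with no U_{2,3}-minor. Then M has at most (n/r)^r bases, with equality attainable when r divides n. -/
open Matroid Set Filter

variable {α : Type*}

/-- The number of bases of a matroid. -/
noncomputable def Matroid.numBases (M : Matroid α) : ℕ := {B : Set α | M.IsBase B}.ncard

/-- Deletion of a set of elements from a matroid. -/
def Matroid.del (M : Matroid α) (D : Set α) : Matroid α := M ↾ (M.E \ D)

/-- Contraction of a set of elements in a matroid, defined by duality. -/
def Matroid.con (M : Matroid α) (C : Set α) : Matroid α := (M✶ ↾ (M✶.E \ C))✶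

/-- `N` is a minor of `M`: it is obtained by contracting a set `C` and deleting a set `D`. -/
def Matroid.IsMinorOf (N M : Matroid α) : Prop :=
  ∃ C D : Set α, C ⊆ M.E ∧ D ⊆ M.E ∧ Disjoint C D ∧ N = (M.con C).del D

/-- `M` is (a copy of) the uniform matroid `U_{s,t}`: it has `t` elements and its bases are
exactly the `s`-element subsets of the ground set. -/
def Matroid.IsUnif (M : Matroid α) (s t : ℕ) : Prop :=
  M.E.Finite ∧ M.E.ncard = t ∧ ∀ B, M.IsBase B ↔ B ⊆ M.E ∧ B.ncard = s

/-- `M` has a minor isomorphic to the uniform matroid `U_{s,t}`. -/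
def Matroid.HasUnifMinor (M : Matroid α) (s t : ℕ) : Prop :=
  ∃ N : Matroid α, N.IsMinorOf M ∧ N.IsUnif s t

/-- `M` has a restriction isomorphic to the uniform matroid `U_{s,t}`. -/
def Matroid.HasUnifRestriction (M : Matroid α) (s t : ℕ) : Prop :=
  ∃ X ⊆ M.E, (M ↾ X).IsUnif s t

/-- `M` has rank `r`. -/
def Matroid.RankEq (M : Matroid α) (r : ℕ) : Prop := ∃ B, M.IsBase B ∧ B.ncard = r

/-- `M` is a simple matroid: every single element and every pair of distinct elements
of the ground set is independent. -/
def Matroid.IsSimple (M : Matroid α) : Prop :=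
  (∀ e ∈ M.E, M.Indep {e}) ∧ ∀ e ∈ M.E, ∀ f ∈ M.E, e ≠ f → M.Indep {e, f}

/-!
Every circuit of a matroid without a `U_{2,3}`-minor has at most two elements: contracting all
but three elements of a larger circuit leaves a triangle. So the nonloops fall into the parallel
classes of the elements of a fixed base `B₀`, and every base is a transversal of these classes.
The number of bases is therefore at most the product of the class sizes, whose sum is at most
`n`, and AM–GM bounds the product by `(n / r) ^ r`. Equality holds for `r` disjoint parallel
classes of size `n / r`.
-/

lemma Real.prod_le_sum_div_card_pow {ι : Type*} (s : Finset ι) (z : ι → ℝ)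
    (hz : ∀ i ∈ s, 0 ≤ z i) : ∏ i ∈ s, z i ≤ ((∑ i ∈ s, z i) / s.card) ^ s.card := by
  rcases s.eq_empty_or_nonempty with rfl | hs
  · simp
  have hcard : (0 : ℝ) < s.card := by exact_mod_cast hs.card_pos
  have hamgm := Real.geom_mean_le_arith_mean s (fun _ ↦ 1) z (fun _ _ ↦ zero_le_one)
    (by simpa using hcard) hz
  simp only [Real.rpow_one, Finset.sum_const, nsmul_eq_mul, mul_one, one_mul] at hamgm
  calc ∏ i ∈ s, z i = ((∏ i ∈ s, z i) ^ ((s.card : ℝ)⁻¹)) ^ s.card := by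
        exact (Real.rpow_inv_natCast_pow (Finset.prod_nonneg hz) hs.card_pos.ne').symm
    _ ≤ ((∑ i ∈ s, z i) / s.card) ^ s.card :=
      pow_le_pow_left₀ (Real.rpow_nonneg (Finset.prod_nonneg hz) _) hamgm _

namespace Nat

variable {r k : ℕ}

lemma mapsTo_div_Iio_mul : MapsTo (· / k) (Iio (r * k)) (Iio r) :=
  fun _ hx ↦ Nat.div_lt_of_lt_mul (by rw [mem_Iio] at hx; linarith)

lemma surjOn_div_Iio_mul (hk : 0 < k) : SurjOn (· / k) (Iio (r * k)) (Iio r) :=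
  fun c hc ↦ ⟨c * k, Nat.mul_lt_mul_of_pos_right hc hk, Nat.mul_div_cancel c hk⟩

lemma ncard_Iio_mul_inter_div_preimage (hk : 0 < k) {c : ℕ} (hc : c < r) :
    (Iio (r * k) ∩ (· / k) ⁻¹' {c}).ncard = k := by
  have hck : c * k + k ≤ r * k := by nlinarith
  have hfiber : Iio (r * k) ∩ (· / k) ⁻¹' {c} = Ico (c * k) (c * k + k) := by
    ext x
    simp only [mem_inter_iff, mem_Iio, mem_preimage, mem_singleton_iff, Nat.div_eq_iff hk,
      mem_Ico]
    omega
  rw [hfiber, ncard_Ico_nat]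
  omega

end Nat

namespace Matroid

variable {M N : Matroid α} {B C I T : Set α} {b : α}

lemma IsMinorOf.exists_isCircuit_superset (hNM : N.IsMinorOf M) (hC : N.IsCircuit C) :
    ∃ C', M.IsCircuit C' ∧ C ⊆ C' := by
  obtain ⟨K, D, -, -, -, rfl⟩ := hNM
  obtain ⟨C', hC', hCC', -⟩ :=
    (IsCircuit.of_delete (M := M ／ K) hC).exists_subset_isCircuit_of_contract
  exact ⟨C', hC', hCC'⟩

lemma IsUnif.isCircuit_ground {s : ℕ} (h : N.IsUnif s (s + 1)) : N.IsCircuit N.E := by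
  obtain ⟨hfin, hcard, hbase⟩ := h
  refine isCircuit_iff_forall_ssubset.2 ⟨?_, fun I hI ↦ ?_⟩
  · rw [← not_indep_iff]
    intro hE
    obtain ⟨B, hB, hEB⟩ := hE.exists_isBase_superset
    have hBs := ((hbase B).1 hB).2
    rw [hB.subset_ground.antisymm hEB, hcard] at hBs
    omega
  · have hIs : I.ncard < s + 1 := hcard ▸ ncard_lt_ncard hI hfin
    obtain ⟨J, hIJ, hJE, hJ⟩ :=
      exists_subsuperset_card_eq (n := s) hI.subset (by omega) (by omega)
    exact ((hbase J).2 ⟨hJE, hJ⟩).indep.subset hIJ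

lemma isUnif_of_isCircuit_ground (hE : N.IsCircuit N.E) (hfin : N.E.Finite) :
    N.IsUnif (N.E.ncard - 1) N.E.ncard := by
  refine ⟨hfin, rfl, fun B ↦ ?_⟩
  rw [← isBasis_ground_iff, hE.isBasis_iff_eq_sdiff_singleton]
  constructor
  · rintro ⟨e, he, rfl⟩
    exact ⟨sdiff_subset, ncard_sdiff_singleton_of_mem he⟩
  · rintro ⟨hBE, hB⟩
    have hpos : 0 < N.E.ncard := (ncard_pos hfin).2 hE.nonempty
    obtain ⟨e, he, heB⟩ := exists_of_ssubset (hBE.ssubset_of_ne (by rintro rfl; omega))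
    refine ⟨e, he, eq_of_subset_of_ncard_le (subset_sdiff_singleton hBE heB) ?_ hfin.sdiff⟩
    rw [ncard_sdiff_singleton_of_mem he, hB]

lemma IsCircuit.hasUnifMinor (hC : M.IsCircuit C) (hTC : T ⊆ C) (hT : T.Nonempty)
    (hTfin : T.Finite) : M.HasUnifMinor (T.ncard - 1) T.ncard := by
  have hCE := hC.subset_ground
  set N := M ／ (C \ T) ＼ (M.E \ C) with hN
  have hground : N.E = T := by
    rw [hN, delete_ground, contract_ground]
    ext x
    have := @hTC x
    have := @hCE x
    simp only [Set.mem_sdiff]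
    tauto
  have hTcirc : N.IsCircuit T :=
    delete_isCircuit_iff.2 ⟨hC.contract_sdiff_isCircuit hT hTC,
      disjoint_sdiff_right.mono_left hTC⟩
  refine ⟨N, ⟨C \ T, M.E \ C, sdiff_subset.trans hCE, sdiff_subset,
    disjoint_sdiff_right.mono_left sdiff_subset, rfl⟩, ?_⟩
  rw [← hground] at hTcirc hTfin ⊢
  exact isUnif_of_isCircuit_ground hTcirc hTfin

theorem not_hasUnifMinor_two_three_iff :
    ¬ M.HasUnifMinor 2 3 ↔ ∀ C, M.IsCircuit C → C.encard ≤ 2 := by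
  constructor
  · intro h C hC
    by_contra! hlt
    obtain ⟨T, hTC, hT⟩ := exists_subset_encard_eq (Order.add_one_le_of_lt hlt)
    have hTfin : T.Finite := finite_of_encard_eq_coe hT
    have hT3 : T.ncard = 3 := by
      have := hTfin.cast_ncard_eq
      rw [hT] at this
      exact_mod_cast this
    have := hC.hasUnifMinor hTC (nonempty_of_encard_ne_zero (by rw [hT]; decide)) hTfin
    rw [hT3] at this
    exact h this
  · rintro h ⟨N, hNM, hN⟩
    obtain ⟨C', hC', hEC'⟩ := hNM.exists_isCircuit_superset (hN.isCircuit_ground (s := 2))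
    have h3 : N.E.encard = 3 := by
      rw [← hN.1.cast_ncard_eq, hN.2.1]
      rfl
    have := (encard_le_encard hEC').trans (h C' hC')
    rw [h3] at this
    exact absurd this (by decide)

def parallelClass (M : Matroid α) (b : α) : Set α :=
  {e | M.IsNonloop e ∧ M.closure {e} = M.closure {b}}

lemma parallelClass_subset_ground (M : Matroid α) (b : α) : M.parallelClass b ⊆ M.E :=
  fun _ he ↦ he.1.mem_ground

lemma Indep.pairwiseDisjoint_parallelClass (hI : M.Indep I) :
    I.PairwiseDisjoint M.parallelClass := by
  intro b hb b' hb' hne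
  refine disjoint_left.2 fun e ⟨_, he⟩ ⟨_, he'⟩ ↦ ?_
  have hbb' : b ∈ M.closure {b'} := he' ▸ he ▸ M.mem_closure_self b (hI.subset_ground hb)
  rcases (hI.subset (singleton_subset_iff.2 hb')).mem_closure_iff.1 hbb' with hdep | rfl
  · exact hdep.not_indep (hI.subset (pair_subset hb hb'))
  · exact hne rfl

lemma IsBase.exists_mem_parallelClass (hB : M.IsBase B)
    (hcirc : ∀ C, M.IsCircuit C → C.encard ≤ 2) (hb : M.IsNonloop b) :
    ∃ e ∈ B, e ∈ M.parallelClass b := by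
  by_cases hbB : b ∈ B
  · exact ⟨b, hbB, hb, rfl⟩
  obtain ⟨C, hCB, hC, hbC⟩ :=
    exists_isCircuit_of_mem_closure (hB.closure_eq ▸ hb.mem_ground : b ∈ M.closure B) hbB
  have hbcl := hC.mem_closure_sdiff_singleton_of_mem hbC
  have hCb : (C \ {b}).encard ≤ 1 := by
    have := encard_sdiff_singleton_add_one hbC ▸ hcirc C hC
    exact (ENat.add_le_add_iff_right ENat.one_ne_top).1 this
  obtain hCb | ⟨e, hCb⟩ := encard_le_one_iff_eq.1 hCb
  · rw [hCb] at hbcl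
    exact absurd (isLoop_iff.2 hbcl) hb.not_isLoop
  rw [hCb] at hbcl
  have heC : e ∈ C \ {b} := hCb ▸ mem_singleton e
  refine ⟨e, ?_, hb.isNonloop_of_mem_closure hbcl, (hb.closure_eq_of_mem_closure hbcl).symm⟩
  exact (mem_insert_iff.1 (hCB heC.1)).resolve_left heC.2

lemma numBases_le_prod_ncard_parallelClass (hE : M.E.Finite)
    (hcirc : ∀ C, M.IsCircuit C → C.encard ≤ 2) {B₀ : Finset α} (hB₀ : M.IsBase B₀) :
    M.numBases ≤ ∏ b ∈ B₀, (M.parallelClass b).ncard := by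
  have (b : α) : Finite (M.parallelClass b) :=
    (hE.subset (M.parallelClass_subset_ground b)).to_subtype
  let transversal (s : ∀ b : B₀, M.parallelClass b) : Set α := range fun b ↦ (s b : α)
  have hbases : {B | M.IsBase B} ⊆ range transversal := by
    -- `B` is the transversal of its representatives: they lie in `B` and already span `M`.
    intro B hB
    choose s hsB hs using fun b : B₀ ↦
      hB.exists_mem_parallelClass hcirc (hB₀.indep.isNonloop_of_mem b.2)
    have hsub : range s ⊆ B := range_subset_iff.2 hsB
    have hspan : M.Spanning (range s) := by
      rw [spanning_iff_ground_subset_closure (hsub.trans hB.subset_ground), ← hB₀.closure_eq]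
      refine M.closure_subset_closure_of_subset_closure fun b hb ↦ ?_
      have hb' : b ∈ M.closure {s ⟨b, hb⟩} :=
        (hs ⟨b, hb⟩).2 ▸ M.mem_closure_self b (hB₀.subset_ground hb)
      exact M.closure_subset_closure (singleton_subset_iff.2 (mem_range_self _)) hb'
    exact ⟨fun b ↦ ⟨s b, hs b⟩,
      ((hB.indep.subset hsub).isBase_of_spanning hspan).eq_of_subset_isBase hB hsub⟩
  calc M.numBases ≤ (range transversal).ncard := ncard_le_ncard hbases (finite_range _)
    _ ≤ Nat.card (∀ b : B₀, M.parallelClass b) := by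
      rw [← Nat.card_coe_set_eq]
      exact Finite.card_range_le _
    _ = ∏ b ∈ B₀, (M.parallelClass b).ncard := by
      rw [Nat.card_pi]
      simp only [Nat.card_coe_set_eq]
      exact Finset.prod_coe_sort B₀ fun b ↦ (M.parallelClass b).ncard

lemma Indep.sum_ncard_parallelClass_le (hE : M.E.Finite) {I : Finset α} (hI : M.Indep I) :
    ∑ b ∈ I, (M.parallelClass b).ncard ≤ M.E.ncard := by
  rw [← finsum_mem_coe_finset, ← I.finite_toSet.ncard_biUnion
    (fun b _ ↦ hE.subset (M.parallelClass_subset_ground b)) hI.pairwiseDisjoint_parallelClass]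
  exact ncard_le_ncard (iUnion₂_subset fun b _ ↦ M.parallelClass_subset_ground b) hE

theorem numBases_le_of_forall_isCircuit_encard_le_two (hE : M.E.Finite)
    (hcirc : ∀ C, M.IsCircuit C → C.encard ≤ 2) {B₀ : Finset α} (hB₀ : M.IsBase B₀) :
    (M.numBases : ℝ) ≤ ((M.E.ncard : ℝ) / B₀.card) ^ B₀.card := by
  calc (M.numBases : ℝ) ≤ ∏ b ∈ B₀, ((M.parallelClass b).ncard : ℝ) := by
        exact_mod_cast numBases_le_prod_ncard_parallelClass hE hcirc hB₀
    _ ≤ ((∑ b ∈ B₀, ((M.parallelClass b).ncard : ℝ)) / B₀.card) ^ B₀.card :=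
        Real.prod_le_sum_div_card_pow _ _ fun _ _ ↦ Nat.cast_nonneg _
    _ ≤ ((M.E.ncard : ℝ) / B₀.card) ^ B₀.card := by
        gcongr
        exact_mod_cast hB₀.indep.sum_ncard_parallelClass_le hE

variable {β : Type*} {S : Set β} {E : Set α} {f : α → β}

lemma isBase_comapOn_freeOn_iff (hf : SurjOn f E S) :
    ((freeOn S).comapOn E f).IsBase B ↔ f '' B = S ∧ InjOn f B ∧ B ⊆ E := by
  rw [comapOn_isBase_iff_of_surjOn (by rwa [freeOn_ground]), freeOn_isBase_iff]

lemma IsBase.ncard_eq_of_comapOn_freeOn (hf : SurjOn f E S)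
    (hB : ((freeOn S).comapOn E f).IsBase B) : B.ncard = S.ncard := by
  obtain ⟨himg, hinj, -⟩ := (isBase_comapOn_freeOn_iff hf).1 hB
  rw [← himg, hinj.ncard_image]

lemma IsCircuit.encard_le_two_of_comapOn_freeOn (hf : MapsTo f E S)
    (hC : ((freeOn S).comapOn E f).IsCircuit C) : C.encard ≤ 2 := by
  have hCE : C ⊆ E := hC.subset_ground
  have hninj : ¬ InjOn f C := fun hinj ↦ hC.not_indep
    (comapOn_indep_iff.2 ⟨freeOn_indep (image_subset_iff.2 (hCE.trans hf)), hinj, hCE⟩)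
  simp only [InjOn, not_forall] at hninj
  obtain ⟨x, hx, y, hy, hxy, hne⟩ := hninj
  have hdep : ((freeOn S).comapOn E f).Dep {x, y} := by
    refine ⟨fun hi ↦ hne ((comapOn_indep_iff.1 hi).2.1 (mem_insert x _) (by simp) hxy), ?_⟩
    exact pair_subset (hCE hx) (hCE hy)
  rw [← hC.eq_of_dep_subset hdep (pair_subset hx hy), encard_pair hne]

theorem numBases_comapOn_freeOn {S : Finset β} (hf : SurjOn f E S) :
    ((freeOn (S : Set β)).comapOn E f).numBases = ∏ s ∈ S, (E ∩ f ⁻¹' {s}).ncard := by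
  let transversal (σ : ∀ s : S, ↥(E ∩ f ⁻¹' {(s : β)})) : Set α := range fun s ↦ (σ s : α)
  have hfib (σ : ∀ s : S, ↥(E ∩ f ⁻¹' {(s : β)})) (s : S) : f (σ s) = s := (σ s).2.2
  have hinj : Function.Injective transversal := by
    intro σ τ hστ
    funext s
    obtain ⟨t, hts⟩ : (σ s : α) ∈ transversal τ := hστ ▸ mem_range_self s
    have hts : (τ t : α) = σ s := hts
    obtain rfl : t = s := Subtype.ext (by rw [← hfib τ t, hts, hfib σ s])
    exact Subtype.ext hts.symm
  have hrange : range transversal = {B | ((freeOn (S : Set β)).comapOn E f).IsBase B} := by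
    ext B
    simp only [mem_ofPred_eq, isBase_comapOn_freeOn_iff hf]
    constructor
    · rintro ⟨σ, rfl⟩
      refine ⟨?_, ?_, range_subset_iff.2 fun s ↦ (σ s).2.1⟩
      · rw [← range_comp]
        ext y
        refine ⟨?_, fun hy ↦ ⟨⟨y, hy⟩, hfib σ _⟩⟩
        rintro ⟨s, rfl⟩
        simp only [Function.comp_apply, hfib σ s, Finset.mem_coe, Finset.coe_mem]
      · rintro _ ⟨s, rfl⟩ _ ⟨t, rfl⟩ hst
        rw [hfib σ s, hfib σ t] at hst
        rw [Subtype.ext hst]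
    · rintro ⟨himg, hinjB, hBE⟩
      have hpre (s : S) : ∃ x ∈ B, f x = s := by
        rw [← mem_image, himg]
        exact s.2
      choose σ hσB hσ using hpre
      refine ⟨fun s ↦ ⟨σ s, hBE (hσB s), hσ s⟩, subset_antisymm (range_subset_iff.2 hσB) ?_⟩
      intro x hx
      have hfx : f x ∈ (S : Set β) := himg ▸ mem_image_of_mem f hx
      exact ⟨⟨f x, hfx⟩, hinjB (hσB _) hx (hσ _)⟩
  rw [numBases, ← hrange, ← Nat.card_coe_set_eq, Nat.card_range_of_injective hinj, Nat.card_pi]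
  simp only [Nat.card_coe_set_eq]
  exact Finset.prod_coe_sort S fun s ↦ (E ∩ f ⁻¹' {s}).ncard

/-- The direct sum of `r` copies of `U_{1,k}`, on `{0, …, r * k - 1}` cut into `r` blocks of
`k` consecutive numbers. -/
def blockMatroid (r k : ℕ) : Matroid ℕ := (freeOn (Iio r)).comapOn (Iio (r * k)) (· / k)

variable {r k : ℕ}

lemma blockMatroid_numBases (hk : 0 < k) : (blockMatroid r k).numBases = k ^ r := by
  have hf := Nat.surjOn_div_Iio_mul (r := r) hk
  rw [← Finset.coe_range r] at hf
  have hfiber (c : ℕ) (hc : c ∈ Finset.range r) := Nat.ncard_Iio_mul_inter_div_preimage hk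
    (Finset.mem_range.1 hc)
  rw [blockMatroid, ← Finset.coe_range r, numBases_comapOn_freeOn hf, Finset.prod_congr rfl hfiber,
    Finset.prod_const, Finset.card_range]

lemma blockMatroid_rankEq (hk : 0 < k) : (blockMatroid r k).RankEq r := by
  obtain ⟨B, hB⟩ := (blockMatroid r k).exists_isBase
  exact ⟨B, hB,
    (hB.ncard_eq_of_comapOn_freeOn (Nat.surjOn_div_Iio_mul hk)).trans (ncard_Iio_nat r)⟩

lemma not_hasUnifMinor_blockMatroid : ¬ (blockMatroid r k).HasUnifMinor 2 3 :=
  not_hasUnifMinor_two_three_iff.2 fun _ hC ↦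
    hC.encard_le_two_of_comapOn_freeOn Nat.mapsTo_div_Iio_mul

end Matroid

/-- Every `n`-element rank-`r` matroid with no `U_{2,3}`-minor has at most `(n/r)^r` bases,
with equality attainable when `r` divides `n`. -/
theorem unif_23_minor_free_base_bound (n r : ℕ) (hr : 2 ≤ r) (hrn : r ≤ n) :
    (∀ (M : Matroid α), M.E.Finite → M.E.ncard = n → M.RankEq r →
      ¬ M.HasUnifMinor 2 3 → (M.numBases : ℝ) ≤ ((n : ℝ) / (r : ℝ)) ^ r) ∧
    (r ∣ n → ∃ M : Matroid ℕ, M.E.Finite ∧ M.E.ncard = n ∧ M.RankEq r ∧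
      ¬ M.HasUnifMinor 2 3 ∧ M.numBases = (n / r) ^ r) := by
  refine ⟨fun M hE hn ⟨B₀, hB₀, hB₀r⟩ hminor ↦ ?_, fun ⟨k, hk⟩ ↦ ?_⟩
  · lift B₀ to Finset α using hE.subset hB₀.subset_ground
    rw [ncard_coe_finset] at hB₀r
    subst hn hB₀r
    exact numBases_le_of_forall_isCircuit_encard_le_two hE
      (not_hasUnifMinor_two_three_iff.1 hminor) hB₀
  · subst hk
    have hk : 0 < k := Nat.pos_of_ne_zero (by rintro rfl; omega)
    refine ⟨blockMatroid r k, finite_Iio _, ncard_Iio_nat _, blockMatroid_rankEq hk,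
      not_hasUnifMinor_blockMatroid, ?_⟩
    rw [blockMatroid_numBases hk, Nat.mul_div_cancel_left k (by omega)]
end

section
/- Every simple matroid of rank 3 with no restriction isomorphic to U_{3,4} is a direct sum of matroids of rank at most 2; equivalently, either it is a line, or its ground set partitions into at most one line and points/lines forming a direct sum decomposition into parts of rank at most 2. -/
open Matroid Set Filter

variable {α : Type*}

/-!
Call the closure of two points a line. If two points `c ≠ q` lie off a line `L`, then of any two
points of `L` one lies on the line through `c` and `q`, for otherwise the four points would form a
`U_{3,4}`; as two distinct lines share at most one point, `L` has at most two points.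
Take a basis `{a, b, c}`. Either `c` is the only point off the line through `a` and `b`, or some
`q ≠ c` is too; then, say, `a` lies on the line through `c` and `q`, which therefore has the three
points `a, c, q`, so by the bound `b` is the only point off it. Either way `M` is a line plus a
coloop, and a coloop splits off as a direct summand.
-/

lemma Set.encard_pair_le (x y : α) : ({x, y} : Set α).encard ≤ 2 :=
  (encard_insert_le _ _).trans (by rw [encard_singleton]; exact one_add_one_eq_two.le)

namespace Matroid

variable {M : Matroid α} {C I X : Set α} {a b c e q x y : α}

-- `r ≠ 0` rules out an infinite base, whose `ncard` is `0`.
lemma RankEq.eRank_eq {r : ℕ} (h : M.RankEq r) (hr : r ≠ 0) : M.eRank = r := by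
  obtain ⟨B, hB, rfl⟩ := h
  rw [← hB.encard_eq_eRank, (Set.finite_of_ncard_ne_zero hr).cast_ncard_eq]

lemma Indep.encard_le_of_subset_closure (hI : M.Indep I) (hIX : I ⊆ M.closure X) :
    I.encard ≤ X.encard :=
  calc I.encard ≤ M.eRk (M.closure X) := hI.encard_le_eRk_of_subset hIX
    _ = M.eRk X := M.eRk_closure_eq X
    _ ≤ X.encard := M.eRk_le_encard X

lemma IsCircuit.restrict_isUnif {k : ℕ} (hC : M.IsCircuit C) (hCk : C.ncard = k + 1) :
    (M ↾ C).IsUnif k (k + 1) := by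
  have hCfin : C.Finite := Set.finite_of_ncard_ne_zero (by omega)
  have hcard : ∀ e ∈ C, (C \ {e}).ncard = k := fun e he ↦ by
    rw [ncard_sdiff_singleton_of_mem he, hCk]; rfl
  refine ⟨hCfin, hCk, fun B ↦ ?_⟩
  rw [isBase_restrict_iff hC.subset_ground, hC.isBasis_iff_eq_sdiff_singleton]
  constructor
  · rintro ⟨e, he, rfl⟩
    exact ⟨sdiff_subset, hcard e he⟩
  · rintro ⟨hBC, hBk⟩
    obtain ⟨e, heC, heB⟩ := exists_of_ssubset (hBC.ssubset_of_ne (by rintro rfl; omega))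
    exact ⟨e, heC, Set.eq_of_subset_of_ncard_le (subset_sdiff_singleton hBC heB)
      (by rw [hcard e heC, hBk]) hCfin.sdiff⟩

lemma IsColoop.eq_disjointSum (he : M.IsColoop e) :
    M = (M ↾ {e}).disjointSum (M ↾ (M.E \ {e}))
      (disjoint_sdiff_right : Disjoint {e} (M.E \ {e})) := by
  have heE : {e} ⊆ M.E := singleton_subset_iff.2 he.mem_ground
  refine ext_indep (disjointSum_ground_eq.trans (union_sdiff_cancel heE)).symm fun I hI ↦
    Iff.trans ?_ disjointSum_indep_iff.symm
  rw [restrict_indep_iff, restrict_indep_iff, restrict_ground_eq, restrict_ground_eq,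
    union_sdiff_cancel heE, ← inter_sdiff_assoc, inter_eq_left.2 hI,
    sdiff_indep_iff_indep_of_subset_coloops (singleton_subset_iff.2 he)]
  exact ⟨fun h ↦ ⟨⟨he.isNonloop.indep.subset inter_subset_right, inter_subset_right⟩,
    ⟨h, sdiff_subset_sdiff_left hI⟩, hI⟩, fun h ↦ h.2.1.1⟩

lemma hasUnifRestriction_three_four_of_notMem_closure (hr : M.RankEq 3) (hxy : M.Indep {x, y})
    (hcq : M.Indep {c, q}) (hne : x ≠ y) (hne' : c ≠ q) (hc : c ∈ M.E \ M.closure {x, y})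
    (hq : q ∈ M.E \ M.closure {x, y}) (hx : x ∈ M.E \ M.closure {c, q})
    (hy : y ∈ M.E \ M.closure {c, q}) : M.HasUnifRestriction 3 4 := by
  have hne_of_notMem : ∀ {z u v : α}, M.Indep {u, v} → z ∉ M.closure {u, v} →
      z ≠ u ∧ z ≠ v :=
    fun huv hz ↦ by simpa using fun h ↦ hz (M.subset_closure _ huv.subset_ground h)
  have hindep : ∀ {z u v : α}, M.Indep {u, v} → z ∈ M.E \ M.closure {u, v} →
      M.Indep {z, u, v} :=
    fun huv hz ↦ huv.insert_indep_iff.2 (Or.inl hz)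
  obtain ⟨hxc, hxq⟩ := hne_of_notMem hcq hx.2
  obtain ⟨hyc, hyq⟩ := hne_of_notMem hcq hy.2
  have hcard : ({x, y, c, q} : Set α).ncard = 3 + 1 := by
    rw [ncard_insert_of_notMem (by simp [hne, hxc, hxq]),
      ncard_insert_of_notMem (by simp [hyc, hyq]), ncard_pair hne']
  have hdep : ¬ M.Indep {x, y, c, q} := fun h ↦ by
    have h4 := h.encard_le_eRank
    rw [hr.eRank_eq (by norm_num), ← (Set.finite_of_ncard_ne_zero (by omega)).cast_ncard_eq,
      hcard] at h4
    norm_num at h4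
  have hcirc : M.IsCircuit {x, y, c, q} := by
    refine isCircuit_iff_dep_forall_sdiff_singleton_indep.2
      ⟨⟨hdep, by simp [insert_subset_iff, hx.1, hy.1, hc.1, hq.1]⟩, ?_⟩
    rintro e (rfl | rfl | rfl | rfl)
    · refine (hindep hcq hy).subset fun z ↦ ?_
      simp only [Set.mem_sdiff, mem_insert_iff, mem_singleton_iff]; tauto
    · refine (hindep hcq hx).subset fun z ↦ ?_
      simp only [Set.mem_sdiff, mem_insert_iff, mem_singleton_iff]; tauto
    · refine (hindep hxy hq).subset fun z ↦ ?_
      simp only [Set.mem_sdiff, mem_insert_iff, mem_singleton_iff]; tauto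
    · refine (hindep hxy hc).subset fun z ↦ ?_
      simp only [Set.mem_sdiff, mem_insert_iff, mem_singleton_iff]; tauto
  exact ⟨_, hcirc.subset_ground, hcirc.restrict_isUnif hcard⟩

namespace IsSimple

lemma indep_pair (hM : M.IsSimple) (hx : x ∈ M.E) (hy : y ∈ M.E) : M.Indep {x, y} := by
  obtain rfl | hxy := eq_or_ne x y
  · simpa using hM.1 x hx
  · exact hM.2 x hx y hy hxy

lemma mem_closure_pair_or_mem_closure_pair (hM : M.IsSimple) (hr : M.RankEq 3)
    (hU : ¬ M.HasUnifRestriction 3 4) (hne : x ≠ y) (hne' : c ≠ q) (hx : x ∈ M.E)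
    (hy : y ∈ M.E) (hc : c ∈ M.E \ M.closure {x, y}) (hq : q ∈ M.E \ M.closure {x, y}) :
    x ∈ M.closure {c, q} ∨ y ∈ M.closure {c, q} := by
  by_contra! h
  exact hU <| hasUnifRestriction_three_four_of_notMem_closure hr (hM.indep_pair hx hy)
    (hM.indep_pair hc.1 hq.1) hne hne' hc hq ⟨hx, h.1⟩ ⟨hy, h.2⟩

lemma closure_pair_inter_closure_pair_subsingleton (hM : M.IsSimple)
    (hc : c ∈ M.E \ M.closure {a, b}) : (M.closure {a, b} ∩ M.closure {c, q}).Subsingleton := by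
  rintro x ⟨hxL, hxL'⟩ y ⟨hyL, hyL'⟩
  by_contra hne
  have hxy := hM.indep_pair (M.closure_subset_ground _ hxL) (M.closure_subset_ground _ hyL)
  have hcxy : c ∉ M.closure {x, y} := fun h ↦
    hc.2 (M.closure_subset_closure_of_subset_closure (pair_subset hxL hyL) h)
  have hcxy' : c ∉ ({x, y} : Set α) := fun h ↦ hcxy (M.subset_closure _ hxy.subset_ground h)
  have h3 := (hxy.insert_indep_iff.2 (Or.inl ⟨hc.1, hcxy⟩)).encard_le_of_subset_closure
    (insert_subset (M.mem_closure_of_mem' (by simp) hc.1) (pair_subset hxL' hyL'))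
  rw [encard_insert_of_notMem hcxy', encard_pair hne] at h3
  exact absurd (h3.trans (encard_pair_le c q)) (by norm_num)

lemma encard_closure_pair_le_two (hM : M.IsSimple) (hr : M.RankEq 3)
    (hU : ¬ M.HasUnifRestriction 3 4) (hne : c ≠ q) (hc : c ∈ M.E \ M.closure {a, b})
    (hq : q ∈ M.E \ M.closure {a, b}) : (M.closure {a, b}).encard ≤ 2 := by
  set L := M.closure {a, b}
  have hoff : (L \ M.closure {c, q}).Subsingleton := by
    rintro x ⟨hxL, hx⟩ y ⟨hyL, hy⟩
    by_contra hxy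
    have hsub : M.closure {x, y} ⊆ L :=
      M.closure_subset_closure_of_subset_closure (pair_subset hxL hyL)
    obtain h | h := hM.mem_closure_pair_or_mem_closure_pair hr hU hxy hne
      (M.closure_subset_ground _ hxL) (M.closure_subset_ground _ hyL)
      ⟨hc.1, fun h ↦ hc.2 (hsub h)⟩ ⟨hq.1, fun h ↦ hq.2 (hsub h)⟩
    exacts [hx h, hy h]
  calc L.encard = (L \ M.closure {c, q}).encard + (L ∩ M.closure {c, q}).encard :=
        (encard_sdiff_add_encard_inter _ _).symm
    _ ≤ 1 + 1 := add_le_add (encard_le_one_iff_subsingleton.2 hoff)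
        (encard_le_one_iff_subsingleton.2 (hM.closure_pair_inter_closure_pair_subsingleton hc))
    _ = 2 := one_add_one_eq_two

lemma sdiff_closure_pair_eq_singleton (hM : M.IsSimple) (hr : M.RankEq 3)
    (hU : ¬ M.HasUnifRestriction 3 4) (ha : a ∈ M.E) (hb : b ∈ M.E) (hab : a ≠ b)
    (hcq : c ≠ q) (hc : c ∈ M.E \ M.closure {a, b}) (hq : q ∈ M.E \ M.closure {a, b})
    (haL : a ∈ M.closure {c, q}) : M.E \ M.closure {c, q} = {b} := by
  have hpair : ({a, b} : Set α) ⊆ M.closure {a, b} := M.subset_closure _ (pair_subset ha hb)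
  have hbL : b ∉ M.closure {c, q} := fun hbL ↦ hab <|
    hM.closure_pair_inter_closure_pair_subsingleton hc ⟨hpair (by simp), haL⟩
      ⟨hpair (by simp), hbL⟩
  refine eq_singleton_iff_unique_mem.2 ⟨⟨hb, hbL⟩, fun r hr' ↦ ?_⟩
  by_contra hrb
  have h2 := hM.encard_closure_pair_le_two hr hU (Ne.symm hrb) ⟨hb, hbL⟩ hr'
  have hac : a ≠ c := by rintro rfl; exact hc.2 (hpair (by simp))
  have haq : a ≠ q := by rintro rfl; exact hq.2 (hpair (by simp))
  have h3 : ({a, c, q} : Set α).encard = 3 := encard_eq_three.2 ⟨a, c, q, hac, haq, hcq, rfl⟩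
  have hsub : ({a, c, q} : Set α) ⊆ M.closure {c, q} :=
    insert_subset haL (M.subset_closure _ (pair_subset hc.1 hq.1))
  exact absurd ((encard_le_encard hsub).trans h2) (by rw [h3]; norm_num)

lemma exists_sdiff_closure_pair_eq_singleton (hM : M.IsSimple) (hr : M.RankEq 3)
    (hU : ¬ M.HasUnifRestriction 3 4) : ∃ x y z, M.E \ M.closure {x, y} = {z} := by
  have ⟨B, hB, hB3⟩ := hr
  obtain ⟨a, b, c, hab, hac, hbc, rfl⟩ := ncard_eq_three.1 hB3
  have hc : c ∈ M.E \ M.closure {a, b} := by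
    refine ⟨hB.subset_ground (by simp), fun h ↦ hB.indep.notMem_closure_sdiff_of_mem
      (e := c) (by simp) (M.closure_subset_closure ?_ h)⟩
    rintro z (rfl | rfl) <;> simp [hac, hbc]
  by_cases h : ∀ r ∈ M.E \ M.closure {a, b}, r = c
  · exact ⟨a, b, c, eq_singleton_iff_unique_mem.2 ⟨hc, h⟩⟩
  push Not at h
  obtain ⟨q, hq, hqc⟩ := h
  have hcq : c ≠ q := Ne.symm hqc
  have ha : a ∈ M.E := hB.subset_ground (by simp)
  have hb : b ∈ M.E := hB.subset_ground (by simp)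
  obtain haL | hbL := hM.mem_closure_pair_or_mem_closure_pair hr hU hab hcq ha hb hc hq
  · exact ⟨c, q, b, hM.sdiff_closure_pair_eq_singleton hr hU ha hb hab hcq hc hq haL⟩
  · rw [pair_comm] at hc hq
    exact ⟨c, q, a, hM.sdiff_closure_pair_eq_singleton hr hU hb ha hab.symm hcq hc hq hbL⟩

lemma exists_isColoop_and_closure_pair_eq (hM : M.IsSimple) (hr : M.RankEq 3)
    (hU : ¬ M.HasUnifRestriction 3 4) :
    ∃ c x y, M.IsColoop c ∧ M.closure {x, y} = M.E \ {c} := by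
  obtain ⟨x, y, c, hline⟩ := hM.exists_sdiff_closure_pair_eq_singleton hr hU
  have hc : c ∈ M.E := (hline.symm.subset rfl).1
  have hL : M.closure {x, y} = M.E \ {c} := by
    rw [← hline, sdiff_sdiff_cancel_left (M.closure_subset_ground _)]
  refine ⟨c, x, y, ?_, hL⟩
  rw [isColoop_iff_notMem_closure_compl hc, ← hL, closure_closure, hL]
  simp

end IsSimple

end Matroid

theorem unif_34_restriction_free_direct_sum_general (M : Matroid α)
    (hsimple : M.IsSimple) (hrank : M.RankEq 3)
    (hU34 : ¬ M.HasUnifRestriction 3 4) :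
    ∃ (ι : Type) (X : ι → Set α),
      (M.E = ⋃ i, X i) ∧ (Pairwise (Function.onFun Disjoint X)) ∧
      (∀ i, ∀ I ⊆ X i, M.Indep I → I.ncard ≤ 2) ∧
      (∀ B : Set α, M.IsBase B ↔ (B ⊆ M.E ∧ ∀ i, (M ↾ (X i)).IsBase (B ∩ X i))) := by
  obtain ⟨c, x, y, hc, hL⟩ := hsimple.exists_isColoop_and_closure_pair_eq hrank hU34
  have hcE : {c} ⊆ M.E := singleton_subset_iff.2 hc.mem_ground
  refine ⟨Bool, fun i ↦ bif i then {c} else M.E \ {c}, ?_, ?_, ?_, fun B ↦ ?_⟩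
  · rw [← union_eq_iUnion, union_sdiff_cancel hcE]
  · exact pairwise_disjoint_on_bool.2 disjoint_sdiff_right
  · rintro (_ | _) I hI hind
    · rw [← hL] at hI
      have h2 := (hind.encard_le_of_subset_closure hI).trans (encard_pair_le x y)
      exact ((encard_le_coe_iff_finite_ncard_le (k := 2)).1 h2).2
    · exact (ncard_le_ncard hI (finite_singleton c)).trans (by simp)
  · refine (congrArg (·.IsBase B) hc.eq_disjointSum).to_iff.trans
      (disjointSum_isBase_iff.trans ?_)
    simp only [restrict_ground_eq, union_sdiff_cancel hcE, Bool.forall_bool, cond_false,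
      cond_true]
    tauto

/-- Every simple rank-3 matroid with no `U_{3,4}`-restriction is a direct sum of matroids of
rank at most 2: its ground set partitions into parts, each of rank at most 2, such that the
bases of `M` are exactly the sets meeting each part in a base of the restriction to that part. -/
theorem unif_34_restriction_free_direct_sum (M : Matroid α)
    (hfin : M.E.Finite) (hsimple : M.IsSimple) (hrank : M.RankEq 3)
    (hU34 : ¬ M.HasUnifRestriction 3 4) :
    ∃ (ι : Type) (X : ι → Set α),
      (M.E = ⋃ i, X i) ∧ (Pairwise (Function.onFun Disjoint X)) ∧
      (∀ i, ∀ I ⊆ X i, M.Indep I → I.ncard ≤ 2) ∧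
      (∀ B : Set α, M.IsBase B ↔ (B ⊆ M.E ∧ ∀ i, (M ↾ (X i)).IsBase (B ∩ X i))) :=
  unif_34_restriction_free_direct_sum_general M hsimple hrank hU34
end

section
/- Let M be a rank-r matroid on ground set {1,…,s} with r ≥ 2, and let p_M(x₁,…,x_s) = Σ_{B basis of M} ∏_{j ∈ B} x_j be its Lagrangian polynomial. For any i ∈ {1,…,s} and any nonnegative reals x₁,…,x_s with Σ_j x_j = 1, the partial derivative satisfies ∂p_M/∂x_i (x₁,…,x_s) ≤ (1 - x_i)^{r-1} · λ(M/i), where λ(M/i) is the Lagrangian (maximum of the Lagrangian polynomial of M/i over the standard simplex). -/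
/-! Only the bases through `i` contribute to `∂p_M/∂xᵢ`, and deleting `i` from them gives exactly
the bases of `M ／ {i}`; hence the derivative is `p_{M/i}` evaluated at `x` with `xᵢ` replaced
by `0`. That polynomial is homogeneous of degree `r - 1`, and the point, rescaled by
`1 / (1 - xᵢ)`, lies in the standard simplex. -/

open Matroid Set Filter

variable {α : Type*}

open Classical in
/-- The Lagrangian polynomial of a matroid on ground set `Fin s`. -/
noncomputable def Matroid.lagPoly {s : ℕ} (M : Matroid (Fin s)) (x : Fin s → ℝ) : ℝ :=
  ∑ B ∈ Finset.univ.filter (fun B : Finset (Fin s) => M.IsBase ↑B), ∏ j ∈ B, x j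

/-- The Lagrangian of a matroid on ground set `Fin s`: the supremum of its Lagrangian
polynomial over the standard simplex. -/
noncomputable def Matroid.lag {s : ℕ} (M : Matroid (Fin s)) : ℝ :=
  sSup {y | ∃ x : Fin s → ℝ, (∀ j, 0 ≤ x j) ∧ (∑ j, x j) = 1 ∧ M.lagPoly x = y}

namespace Matroid

lemma con_eq_contract (M : Matroid α) (C : Set α) : M.con C = M ／ C := rfl

lemma IsNonloop.contractElem_isBase_iff {M : Matroid α} {e : α} {B : Set α}
    (he : M.IsNonloop e) : (M ／ {e}).IsBase B ↔ e ∉ B ∧ M.IsBase (insert e B) := by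
  rw [he.indep.contract_isBase_iff, union_singleton, disjoint_singleton_right, and_comm]

lemma RankEq.ncard_eq {M : Matroid α} {r : ℕ} (hM : M.RankEq r) {B : Set α}
    (hB : M.IsBase B) : B.ncard = r := by
  obtain ⟨B₀, hB₀, rfl⟩ := hM
  exact hB.ncard_eq_ncard_of_isBase hB₀

lemma IsNonloop.rankEq_contractElem {M : Matroid α} {e : α} {r : ℕ} (he : M.IsNonloop e)
    (hM : M.RankEq r) : (M ／ {e}).RankEq (r - 1) := by
  obtain ⟨B, hB, heB⟩ := he.exists_mem_isBase
  refine ⟨B \ {e}, ?_, ?_⟩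
  · rw [he.contractElem_isBase_iff, insert_sdiff_singleton, insert_eq_of_mem heB]
    exact ⟨fun h => h.2 rfl, hB⟩
  · rw [ncard_sdiff_singleton_of_mem heB, hM.ncard_eq hB]

variable {s : ℕ}

open Classical in
noncomputable def lagPolyPartial (M : Matroid (Fin s)) (i : Fin s) (x : Fin s → ℝ) : ℝ :=
  ∑ B ∈ Finset.univ.filter (fun B : Finset (Fin s) => M.IsBase ↑B ∧ i ∈ B), ∏ j ∈ B.erase i, x j

lemma lagPoly_nonneg (M : Matroid (Fin s)) {x : Fin s → ℝ} (hx : ∀ j, 0 ≤ x j) :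
    0 ≤ M.lagPoly x :=
  Finset.sum_nonneg fun _ _ => Finset.prod_nonneg fun j _ => hx j

lemma bddAbove_lagPoly_simplex (M : Matroid (Fin s)) :
    BddAbove {y | ∃ x : Fin s → ℝ, (∀ j, 0 ≤ x j) ∧ (∑ j, x j) = 1 ∧ M.lagPoly x = y} := by
  classical
  refine ⟨(Finset.univ.filter fun B : Finset (Fin s) => M.IsBase ↑B).card, ?_⟩
  rintro _ ⟨x, hx, hsum, rfl⟩
  have hx₁ : ∀ j, x j ≤ 1 := fun j =>
    hsum ▸ Finset.single_le_sum (fun k _ => hx k) (Finset.mem_univ j)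
  rw [lagPoly, Finset.cast_card]
  exact Finset.sum_le_sum fun B _ => Finset.prod_le_one (fun j _ => hx j) fun j _ => hx₁ j

lemma lagPoly_le_lag (M : Matroid (Fin s)) {x : Fin s → ℝ} (hx : ∀ j, 0 ≤ x j)
    (hsum : ∑ j, x j = 1) : M.lagPoly x ≤ M.lag :=
  le_csSup M.bddAbove_lagPoly_simplex ⟨x, hx, hsum, rfl⟩

lemma lag_nonneg (M : Matroid (Fin s)) {x : Fin s → ℝ} (hx : ∀ j, 0 ≤ x j)
    (hsum : ∑ j, x j = 1) : 0 ≤ M.lag :=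
  (M.lagPoly_nonneg hx).trans (M.lagPoly_le_lag hx hsum)

lemma lagPoly_smul {M : Matroid (Fin s)} {k : ℕ} (hM : M.RankEq k) (c : ℝ) (x : Fin s → ℝ) :
    M.lagPoly (c • x) = c ^ k * M.lagPoly x := by
  classical
  rw [lagPoly, lagPoly, Finset.mul_sum]
  refine Finset.sum_congr rfl fun B hB => ?_
  have hcard : B.card = k := by
    simpa using hM.ncard_eq (Finset.mem_filter.mp hB).2
  simp only [Pi.smul_apply, smul_eq_mul, Finset.prod_mul_distrib, Finset.prod_const, hcard]

lemma lagPoly_le_sum_pow_mul_lag {M : Matroid (Fin s)} {k : ℕ} (hM : M.RankEq k) (hk : k ≠ 0)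
    {x : Fin s → ℝ} (hx : ∀ j, 0 ≤ x j) : M.lagPoly x ≤ (∑ j, x j) ^ k * M.lag := by
  set c := ∑ j, x j
  rcases (Finset.sum_nonneg fun j _ => hx j : 0 ≤ c).eq_or_lt with hc | hc
  · have hx_eq : x = (0 : ℝ) • x := funext fun j => by
      simpa using
        (Finset.sum_eq_zero_iff_of_nonneg fun j _ => hx j).mp hc.symm j (Finset.mem_univ j)
    rw [show c = 0 from hc.symm, hx_eq, lagPoly_smul hM, zero_pow hk, zero_mul, zero_mul]
  · have hsum : ∑ j, (c⁻¹ • x) j = 1 := by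
      simp only [Pi.smul_apply, smul_eq_mul, ← Finset.mul_sum, inv_mul_cancel₀ hc.ne', c]
    calc M.lagPoly x = M.lagPoly (c • c⁻¹ • x) := by rw [smul_inv_smul₀ hc.ne']
      _ = c ^ k * M.lagPoly (c⁻¹ • x) := lagPoly_smul hM c _
      _ ≤ c ^ k * M.lag := by
        gcongr
        exact M.lagPoly_le_lag (fun j => mul_nonneg (inv_nonneg.2 hc.le) (hx j)) hsum

open Classical in
lemma lagPoly_update (M : Matroid (Fin s)) (i : Fin s) (x : Fin s → ℝ) (y : ℝ) :
    M.lagPoly (Function.update x i y) = y * M.lagPolyPartial i x +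
      ∑ B ∈ Finset.univ.filter (fun B : Finset (Fin s) => M.IsBase ↑B ∧ i ∉ B), ∏ j ∈ B, x j := by
  rw [lagPoly, ← Finset.sum_filter_add_sum_filter_not _ (fun B => i ∈ B), Finset.filter_filter,
    Finset.filter_filter, lagPolyPartial, Finset.mul_sum]
  congr 1
  · refine Finset.sum_congr rfl fun B hB => ?_
    rw [Finset.prod_update_of_mem (Finset.mem_filter.mp hB).2.2, Finset.sdiff_singleton_eq_erase]
  · exact Finset.sum_congr rfl fun B hB =>
      Finset.prod_update_of_notMem (Finset.mem_filter.mp hB).2.2 _ _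

lemma hasDerivAt_lagPoly_update (M : Matroid (Fin s)) (i : Fin s) (x : Fin s → ℝ) (t : ℝ) :
    HasDerivAt (fun y => M.lagPoly (Function.update x i y)) (M.lagPolyPartial i x) t := by
  simp only [lagPoly_update]
  exact (hasDerivAt_mul_const _).add_const _

lemma lagPolyPartial_eq_zero {M : Matroid (Fin s)} {i : Fin s} (hi : ¬ M.IsNonloop i)
    (x : Fin s → ℝ) : M.lagPolyPartial i x = 0 := by
  classical
  refine Finset.sum_eq_zero fun B hB => absurd ?_ hi
  obtain ⟨hB, hiB⟩ := (Finset.mem_filter.mp hB).2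
  exact hB.indep.isNonloop_of_mem hiB

lemma IsNonloop.lagPolyPartial_eq {M : Matroid (Fin s)} {i : Fin s} (hi : M.IsNonloop i)
    (x : Fin s → ℝ) : M.lagPolyPartial i x = (M ／ {i}).lagPoly x := by
  classical
  refine Finset.sum_nbij' (fun B => B.erase i) (insert i) ?_ ?_ ?_ ?_ fun _ _ => rfl
  all_goals simp +contextual [hi.contractElem_isBase_iff]

lemma lagPoly_update_of_notMem_ground {M : Matroid (Fin s)} {i : Fin s} (hi : i ∉ M.E)
    (x : Fin s → ℝ) (t : ℝ) : M.lagPoly (Function.update x i t) = M.lagPoly x := by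
  classical
  exact Finset.sum_congr rfl fun B hB => Finset.prod_update_of_notMem
    (fun h => hi ((Finset.mem_filter.mp hB).2.subset_ground h)) _ _

end Matroid

theorem lagrangian_gradient_bound_general {s : ℕ} (r : ℕ) (hr : 2 ≤ r) (M : Matroid (Fin s))
    (hrank : M.RankEq r) (i : Fin s)
    (x : Fin s → ℝ) (hx : ∀ j, 0 ≤ x j) (hsum : ∑ j, x j = 1) :
    deriv (fun y => M.lagPoly (Function.update x i y)) (x i) ≤
      (1 - x i) ^ (r - 1) * (M.con {i}).lag := by
  rw [(M.hasDerivAt_lagPoly_update i x (x i)).deriv, con_eq_contract]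
  by_cases hi : M.IsNonloop i
  · set x' := Function.update x i 0
    have hx' : ∀ j, 0 ≤ x' j := fun j => by
      by_cases h : j = i <;> simp [x', h, hx j]
    have hsum' : ∑ j, x' j = 1 - x i := by
      rw [Finset.sum_update_of_mem (Finset.mem_univ i), zero_add, Finset.sdiff_singleton_eq_erase,
        ← hsum, Finset.sum_erase_eq_sub (Finset.mem_univ i)]
    calc M.lagPolyPartial i x = (M ／ {i}).lagPoly x' := by
          rw [hi.lagPolyPartial_eq, lagPoly_update_of_notMem_ground (by simp)]
      _ ≤ _ := hsum' ▸ lagPoly_le_sum_pow_mul_lag (hi.rankEq_contractElem hrank) (by omega) hx'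
  · have hxi : x i ≤ 1 := hsum ▸ Finset.single_le_sum (fun j _ => hx j) (Finset.mem_univ i)
    rw [lagPolyPartial_eq_zero hi]
    exact mul_nonneg (pow_nonneg (sub_nonneg.2 hxi) _) ((M ／ {i}).lag_nonneg hx hsum)

/-- The partial derivative of the Lagrangian polynomial of a rank-`r` matroid at a point of
the standard simplex is at most `(1 - xᵢ)^(r-1)` times the Lagrangian of the contraction. -/
theorem lagrangian_gradient_bound {s : ℕ} (r : ℕ) (hr : 2 ≤ r) (M : Matroid (Fin s))
    (hE : M.E = Set.univ) (hrank : M.RankEq r) (i : Fin s)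
    (x : Fin s → ℝ) (hx : ∀ j, 0 ≤ x j) (hsum : ∑ j, x j = 1) :
    deriv (fun y => M.lagPoly (Function.update x i y)) (x i) ≤
      (1 - x i) ^ (r - 1) * (M.con {i}).lag :=
  lagrangian_gradient_bound_general r hr M hrank i x hx hsum
end

section
/- Let M be a simple rank-3 matroid with no restriction isomorphic to U_{3,5}. Then either M has no U_{2,5}-minor, or the ground set of M is the union of two lines. -/
open Matroid Set Filter

variable {α : Type*}

/-- A line of a matroid: a maximal subset of the ground set of rank 2. -/
def Matroid.IsLine (M : Matroid α) (L : Set α) : Prop :=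
  L ⊆ M.E ∧ (∀ I ⊆ L, M.Indep I → I.ncard ≤ 2) ∧ (∃ I ⊆ L, M.Indep I ∧ I.ncard = 2) ∧
    ∀ L', L ⊆ L' → L' ⊆ M.E → (∀ I ⊆ L', M.Indep I → I.ncard ≤ 2) → L' = L

/-!
A `U_{2,5}`-minor of a simple rank-3 matroid yields a point `e` and five points `S ∌ e` on
pairwise distinct lines through `e`: contract a point, or, if the minor is a restriction, take
five collinear points and a point `e` off their line. As there is no `U_{3,5}`, three points of
`S` span a line `L ∌ e`. The key count: if `u, v, w` are non-collinear points off `L`, at most one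
point of `L` lies on none of the lines `uv, uw, vw`, since two such points together with
`u, v, w` would form a `U_{3,5}`. Applied to `e` and two points of `S` whose lines through `e`
miss `L`, it shows that there is at most one such point; the other lines through `e` meet `L`
in distinct points, so `|L| ≥ 4`. Applied to `e`, a point `v` off `L`, and a point `y` outside
`L ∪ cl {e, v}`, it shows that no such `y` exists.
-/

namespace Matroid

variable {M : Matroid α} {A I L S X : Set α} {a b e p q u v w x y z : α}

lemma eRk_closure_pair_le_two (M : Matroid α) (a b : α) : M.eRk (M.closure {a, b}) ≤ 2 := by
  rw [eRk_closure_eq]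
  exact (M.eRk_le_encard _).trans ((encard_insert_le _ _).trans (by rw [encard_singleton]; rfl))

lemma Indep.ncard_le_two_of_subset_closure_pair (hI : M.Indep I) (hIab : I ⊆ M.closure {a, b}) :
    I.ncard ≤ 2 :=
  (encard_le_coe_iff_finite_ncard_le.1
    ((hI.encard_le_eRk_of_subset hIab).trans (M.eRk_closure_pair_le_two a b))).2

lemma closure_pair_eq_of_mem_closure_pair (hpq : M.Indep {p, q}) (hne : p ≠ q)
    (hp : p ∈ M.closure {a, b}) (hq : q ∈ M.closure {a, b}) :
    M.closure {p, q} = M.closure {a, b} := by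
  have hr : M.eRk (M.closure {a, b}) ≤ M.eRk {p, q} := by
    rw [hpq.eRk_eq_encard, encard_pair hne]
    exact M.eRk_closure_pair_le_two a b
  rw [(M.isRkFinite_of_finite (toFinite {p, q})).closure_eq_closure_of_subset_of_eRk_ge_eRk
    (pair_subset hp hq) hr, closure_closure]

lemma Indep.notMem_closure_of_insert (h : M.Indep (insert z I)) (hz : z ∉ I) :
    z ∉ M.closure I := by
  simpa [insert_sdiff_self_of_notMem hz] using h.notMem_closure_sdiff_of_mem (mem_insert z I)

lemma notMem_of_inter_closure_pair_eq_empty (hx : x ∈ M.E) (h : L ∩ M.closure {e, x} = ∅) :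
    x ∉ L :=
  fun hxL ↦ (eq_empty_iff_forall_notMem.1 h) x ⟨hxL, M.mem_closure_of_mem' (by simp)⟩

lemma RankEq.ncard_le_of_indep [M.RankFinite] {r : ℕ} (h : M.RankEq r) (hI : M.Indep I) :
    I.ncard ≤ r := by
  obtain ⟨B, hB, rfl⟩ := h
  obtain ⟨B', hB', hIB'⟩ := hI.exists_isBase_superset
  exact (ncard_le_ncard hIB' hB'.finite).trans (hB'.ncard_eq_ncard_of_isBase hB).le

lemma RankEq.exists_notMem_closure_pair (h : M.RankEq 3) (a b : α) :
    ∃ e ∈ M.E, e ∉ M.closure {a, b} := by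
  obtain ⟨B, hB, hB3⟩ := h
  obtain ⟨e, heB, he⟩ := not_subset.1 fun hsub : B ⊆ M.closure {a, b} ↦ by
    have := hB.indep.ncard_le_two_of_subset_closure_pair hsub
    omega
  exact ⟨e, hB.subset_ground heB, he⟩

namespace IsSimple

variable (hs : M.IsSimple)
include hs

lemma indep_insert_pair (hx : x ∈ M.E) (hy : y ∈ M.E) (hxy : x ≠ y) (hz : z ∈ M.E)
    (hzxy : z ∉ M.closure {x, y}) : M.Indep {z, x, y} :=
  (hs.2 x hx y hy hxy).insert_indep_iff.2 (Or.inl ⟨hz, hzxy⟩)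

lemma mem_closure_pair_of_not_indep (hx : x ∈ M.E) (hy : y ∈ M.E) (hxy : x ≠ y) (hz : z ∈ M.E)
    (hdep : ¬ M.Indep {z, x, y}) : z ∈ M.closure {x, y} :=
  by_contra fun h ↦ hdep (hs.indep_insert_pair hx hy hxy hz h)

lemma isLine_closure_pair (ha : a ∈ M.E) (hb : b ∈ M.E) (hab : a ≠ b) :
    M.IsLine (M.closure {a, b}) := by
  have hsub : {a, b} ⊆ M.closure {a, b} := M.subset_closure _ (pair_subset ha hb)
  refine ⟨M.closure_subset_ground _, fun I _ hI ↦ hI.ncard_le_two_of_subset_closure_pair ‹_›,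
    ⟨{a, b}, hsub, hs.2 a ha b hb hab, ncard_pair hab⟩, fun L' hL hL'E hL'2 ↦ ?_⟩
  refine hL.antisymm' fun t ht ↦ by_contra fun htab ↦ ?_
  have hind := hs.indep_insert_pair ha hb hab (hL'E ht) htab
  have := hL'2 _ (insert_subset ht (hsub.trans hL)) hind
  rw [ncard_insert_of_notMem (fun h ↦ htab (hsub h)), ncard_pair hab] at this
  omega

lemma ncard_inter_closure_pair_le_one (hu : u ∈ M.E) (huab : u ∉ M.closure {a, b}) :
    (M.closure {a, b} ∩ M.closure {u, v}).ncard ≤ 1 := by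
  have hsub : (M.closure {a, b} ∩ M.closure {u, v}).Subsingleton := by
    rintro p ⟨hpab, hpuv⟩ q ⟨hqab, hquv⟩
    by_contra hpq
    have hpq' := hs.2 p (M.closure_subset_ground _ hpab) q (M.closure_subset_ground _ hqab) hpq
    have hcl := (closure_pair_eq_of_mem_closure_pair hpq' hpq hpab hqab).symm.trans
      (closure_pair_eq_of_mem_closure_pair hpq' hpq hpuv hquv)
    exact huab (hcl ▸ M.mem_closure_of_mem' (mem_insert u {v}))
  exact (ncard_le_one hsub.finite).2 fun _ hp _ hq ↦ hsub hp hq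

end IsSimple

def IsArc (M : Matroid α) (X : Set α) : Prop :=
  ∀ x ∈ X, ∀ y ∈ X, ∀ z ∈ X, x ≠ y → x ≠ z → y ≠ z → M.Indep {x, y, z}

lemma Indep.isArc (hI : M.Indep I) : M.IsArc I :=
  fun _ hx _ hy _ hz _ _ _ ↦ hI.subset (insert_subset hx (pair_subset hy hz))

lemma IsArc.indep_of_subset (hX : M.IsArc X) (h3 : 3 ≤ X.ncard) (hIX : I ⊆ X)
    (hI : I.ncard ≤ 3) : M.Indep I := by
  obtain ⟨K, hIK, hKX, hK⟩ := exists_subsuperset_card_eq hIX hI h3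
  obtain ⟨x, y, z, hxy, hxz, hyz, rfl⟩ := ncard_eq_three.1 hK
  exact (hX x (hKX (by simp)) y (hKX (by simp)) z (hKX (by simp)) hxy hxz hyz).subset hIK

lemma IsArc.isUnif [M.RankFinite] (hrank : M.RankEq 3) (hX : M.IsArc X) (hXE : X ⊆ M.E)
    (hXfin : X.Finite) (h3 : 3 ≤ X.ncard) : (M ↾ X).IsUnif 3 X.ncard := by
  refine ⟨hXfin, rfl, fun B ↦ ?_⟩
  rw [isBase_restrict_iff hXE]
  refine ⟨fun hB ↦ ⟨hB.subset, (hrank.ncard_le_of_indep hB.indep).antisymm ?_⟩,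
    fun ⟨hBX, hB⟩ ↦ ?_⟩
  · by_contra! hlt
    obtain ⟨w, hwX, hwB⟩ :=
      exists_mem_notMem_of_ncard_lt_ncard (hlt.trans_le h3) (hXfin.subset hB.subset)
    refine hwB (hB.mem_of_insert_indep hwX
      (hX.indep_of_subset h3 (insert_subset hwX hB.subset) ?_))
    exact (ncard_insert_le w B).trans (by omega)
  · refine (hX.indep_of_subset h3 hBX hB.le).isBasis_of_forall_insert hBX fun w hw ↦ ?_
    refine (not_indep_iff (insert_subset (hXE hw.1) (hBX.trans hXE))).1 fun hi ↦ ?_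
    have := hrank.ncard_le_of_indep hi
    rw [ncard_insert_of_notMem hw.2 (hXfin.subset hBX)] at this
    omega

lemma IsArc.insert_of_notMem_closure (hs : M.IsSimple) (hX : M.IsArc X) (hXE : X ⊆ M.E)
    (hz : z ∈ M.E) (hzX : ∀ x ∈ X, ∀ y ∈ X, x ≠ y → z ∉ M.closure {x, y}) :
    M.IsArc (insert z X) := by
  have hind : ∀ x ∈ X, ∀ y ∈ X, x ≠ y → M.Indep {z, x, y} := fun x hx y hy hxy ↦
    hs.indep_insert_pair (hXE hx) (hXE hy) hxy hz (hzX x hx y hy hxy)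
  rintro x (rfl | hx) y (rfl | hy) w (rfl | hw) hxy hxw hyw
  · exact absurd rfl hxy
  · exact absurd rfl hxy
  · exact absurd rfl hxw
  · exact hind y hy w hw hyw
  · exact absurd rfl hyw
  · rw [Set.insert_comm]; exact hind x hx w hw hxw
  · rw [Set.pair_comm, Set.insert_comm]; exact hind x hx y hy hxy
  · exact hX x hx y hy w hw hxy hxw hyw

lemma IsArc.insert_insert_of_notMem_closure (hs : M.IsSimple) (hA : M.IsArc A) (hAE : A ⊆ M.E)
    (hp : p ∈ M.E) (hq : q ∈ M.E) (hpq : p ≠ q) (hApq : ∀ x ∈ A, x ∉ M.closure {p, q})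
    (hpA : ∀ x ∈ A, ∀ y ∈ A, x ≠ y → p ∉ M.closure {x, y})
    (hqA : ∀ x ∈ A, ∀ y ∈ A, x ≠ y → q ∉ M.closure {x, y}) :
    M.IsArc (insert q (insert p A)) := by
  have hqpy : ∀ y ∈ A, q ∉ M.closure {p, y} := fun y hy ↦ by
    have hyq : y ≠ q := fun h ↦ hApq y hy (M.mem_closure_of_mem' (by simp [h]))
    have hind := hs.indep_insert_pair hp hq hpq (hAE hy) (hApq y hy)
    rw [Set.insert_comm, Set.pair_comm, Set.insert_comm] at hind
    exact hind.notMem_closure_of_insert (by simp [hpq.symm, hyq.symm])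
  refine (hA.insert_of_notMem_closure hs hAE hp hpA).insert_of_notMem_closure hs
    (insert_subset hp hAE) hq ?_
  rintro x (rfl | hx) y (rfl | hy) hxy
  · exact absurd rfl hxy
  · exact hqpy y hy
  · rw [Set.pair_comm]; exact hqpy x hx
  · exact hqA x hx y hy hxy

lemma hasUnifRestriction_of_triangle_of_pair [M.RankFinite] (hs : M.IsSimple) (hrank : M.RankEq 3)
    (hu : u ∈ M.E) (hv : v ∈ M.E) (hw : w ∈ M.E) (huv : u ≠ v) (hwuv : w ∉ M.closure {u, v})
    (hp : p ∈ M.E) (hq : q ∈ M.E) (hpq : p ≠ q) (hupq : u ∉ M.closure {p, q})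
    (hvpq : v ∉ M.closure {p, q}) (hwpq : w ∉ M.closure {p, q})
    (hpK : p ∉ M.closure {u, v} ∪ M.closure {u, w} ∪ M.closure {v, w})
    (hqK : q ∉ M.closure {u, v} ∪ M.closure {u, w} ∪ M.closure {v, w}) :
    M.HasUnifRestriction 3 5 := by
  set K := M.closure {u, v} ∪ M.closure {u, w} ∪ M.closure {v, w}
  set A : Set α := {u, v, w}
  have hAE : A ⊆ M.E := insert_subset hu (pair_subset hv hw)
  have hAK : A ⊆ K := insert_subset (Or.inl (Or.inl (M.mem_closure_of_mem' (mem_insert u {v}))))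
    (pair_subset (Or.inl (Or.inl (M.mem_closure_of_mem' (by simp))))
      (Or.inl (Or.inr (M.mem_closure_of_mem' (by simp)))))
  have hA : M.IsArc A := by
    have := hs.indep_insert_pair hu hv huv hw hwuv
    rw [Set.insert_comm, Set.pair_comm] at this
    exact this.isArc
  have hoff : ∀ z ∉ K, ∀ x ∈ A, ∀ y ∈ A, x ≠ y → z ∉ M.closure {x, y} := by
    intro z hz
    simp only [K, mem_union, not_or] at hz
    rintro x (rfl | rfl | rfl) y (rfl | rfl | rfl) hxy <;> simp_all [Set.pair_comm]
  have hX := hA.insert_insert_of_notMem_closure hs hAE hp hq hpq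
    (by rintro x (rfl | rfl | rfl) <;> assumption) (hoff p hpK) (hoff q hqK)
  have hvw : v ≠ w := by rintro rfl; exact hwuv (M.mem_closure_of_mem' (by simp))
  have huw : u ≠ w := by rintro rfl; exact hwuv (M.mem_closure_of_mem' (by simp))
  have h5 : (insert q (insert p A)).ncard = 5 := by
    rw [ncard_insert_of_notMem (by rintro (rfl | h); exacts [hpq rfl, hqK (hAK h)]),
      ncard_insert_of_notMem fun h ↦ hpK (hAK h), ncard_insert_of_notMem (by simp [huv, huw]),
      ncard_pair hvw]
  have hXE := insert_subset hq (insert_subset hp hAE)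
  exact ⟨_, hXE, h5 ▸ hX.isUnif hrank hXE (toFinite _) (by omega)⟩

lemma ncard_closure_pair_le_of_triangle [M.Finite] (hs : M.IsSimple) (hrank : M.RankEq 3)
    (hU : ¬ M.HasUnifRestriction 3 5) (hu : u ∈ M.E) (hv : v ∈ M.E) (hw : w ∈ M.E)
    (huv : u ≠ v) (hwuv : w ∉ M.closure {u, v}) (huL : u ∉ M.closure {a, b})
    (hvL : v ∉ M.closure {a, b}) (hwL : w ∉ M.closure {a, b}) :
    (M.closure {a, b}).ncard ≤ (M.closure {a, b} ∩ M.closure {u, v}).ncard +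
      (M.closure {a, b} ∩ M.closure {u, w}).ncard +
      (M.closure {a, b} ∩ M.closure {v, w}).ncard + 1 := by
  set L := M.closure {a, b}
  set K := M.closure {u, v} ∪ M.closure {u, w} ∪ M.closure {v, w}
  have hLfin : L.Finite := M.ground_finite.subset (M.closure_subset_ground _)
  have hLK : (L ∩ K).ncard ≤ (L ∩ M.closure {u, v}).ncard + (L ∩ M.closure {u, w}).ncard +
      (L ∩ M.closure {v, w}).ncard := by
    rw [inter_union_distrib_left, inter_union_distrib_left]
    exact (ncard_union_le _ _).trans (add_le_add_left (ncard_union_le _ _) _)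
  by_contra! hlt
  have h2 : 1 < (L \ K).ncard := by
    have := ncard_inter_add_ncard_sdiff_eq_ncard L K hLfin
    omega
  obtain ⟨p, q, ⟨hpL, hpK⟩, ⟨hqL, hqK⟩, hpq⟩ := (one_lt_ncard_iff hLfin.sdiff).1 h2
  have hpE : p ∈ M.E := M.closure_subset_ground _ hpL
  have hqE : q ∈ M.E := M.closure_subset_ground _ hqL
  have hLpq : M.closure {p, q} = L :=
    closure_pair_eq_of_mem_closure_pair (hs.2 p hpE q hqE hpq) hpq hpL hqL
  exact hU (hasUnifRestriction_of_triangle_of_pair hs hrank hu hv hw huv hwuv hpE hqE hpq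
    (hLpq ▸ huL) (hLpq ▸ hvL) (hLpq ▸ hwL) hpK hqK)

lemma ncard_le_ncard_of_inter_closure_pair_nonempty (hs : M.IsSimple) (he : e ∈ M.E)
    (heL : e ∉ L) (hL : L.Finite) (hSE : S ⊆ M.E) (heS : e ∉ S)
    (hS : ∀ x ∈ S, ∀ y ∈ S, x ≠ y → M.Indep {e, x, y})
    (hmeet : ∀ x ∈ S, (L ∩ M.closure {e, x}).Nonempty) : S.ncard ≤ L.ncard := by
  choose! f hf using hmeet
  have hline : ∀ x ∈ S, M.closure {e, f x} = M.closure {e, x} := fun x hx ↦ by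
    have hne : e ≠ f x := fun h ↦ heL (h ▸ (hf x hx).1)
    exact closure_pair_eq_of_mem_closure_pair
      (hs.2 e he (f x) (M.closure_subset_ground _ (hf x hx).2) hne) hne
      (M.mem_closure_of_mem' (mem_insert e {x})) (hf x hx).2
  refine ncard_le_ncard_of_injOn f (fun x hx ↦ (hf x hx).1)
    (fun x hx y hy hfxy ↦ by_contra fun hxy ↦ ?_) hL
  have hyx : y ∈ M.closure {e, x} := by
    rw [← hline x hx, hfxy, hline y hy]
    exact M.mem_closure_of_mem' (by simp) (hSE hy)
  have hind := hS x hx y hy hxy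
  rw [Set.pair_comm, Set.insert_comm] at hind
  have hye : y ≠ e := fun h ↦ heS (h ▸ hy)
  exact hind.notMem_closure_of_insert (by simp [hye, Ne.symm hxy]) hyx

lemma ground_eq_union_of_ncard_inter_add_three_lt [M.Finite] (hs : M.IsSimple)
    (hrank : M.RankEq 3) (hU : ¬ M.HasUnifRestriction 3 5) (he : e ∈ M.E) (hv : v ∈ M.E)
    (hev : e ≠ v) (heL : e ∉ M.closure {a, b}) (hvL : v ∉ M.closure {a, b})
    (hcard : (M.closure {a, b} ∩ M.closure {e, v}).ncard + 3 < (M.closure {a, b}).ncard) :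
    M.E = M.closure {a, b} ∪ M.closure {e, v} := by
  refine (union_subset (M.closure_subset_ground _) (M.closure_subset_ground _)).antisymm'
    fun y hy ↦ by_contra fun hyL ↦ ?_
  rw [mem_union, not_or] at hyL
  have := ncard_closure_pair_le_of_triangle hs hrank hU he hv hy hev hyL.2 heL hvL hyL.1
  have := hs.ncard_inter_closure_pair_le_one (v := y) he heL
  have := hs.ncard_inter_closure_pair_le_one (v := y) hv hvL
  omega

lemma exists_three_le_ncard_closure_pair [M.Finite] (hs : M.IsSimple) (hrank : M.RankEq 3)
    (hU : ¬ M.HasUnifRestriction 3 5) (hSE : S ⊆ M.E) (hS5 : S.ncard = 5) :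
    ∃ a ∈ S, ∃ b ∈ S, a ≠ b ∧ 3 ≤ (M.closure {a, b}).ncard := by
  have hSarc : ¬ M.IsArc S := fun h ↦
    hU ⟨S, hSE, hS5 ▸ h.isUnif hrank hSE (M.ground_finite.subset hSE) (by omega)⟩
  simp only [IsArc, not_forall] at hSarc
  obtain ⟨a, ha, b, hb, c, hc, hab, hac, hbc, habc⟩ := hSarc
  rw [Set.pair_comm, Set.insert_comm] at habc
  have hcL := hs.mem_closure_pair_of_not_indep (hSE ha) (hSE hb) hab (hSE hc) habc
  have := ncard_le_ncard (insert_subset hcL (M.subset_closure _ (pair_subset (hSE ha) (hSE hb))))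
    (M.ground_finite.subset (M.closure_subset_ground {a, b}))
  rw [ncard_insert_of_notMem (by simp [hac.symm, hbc.symm]), ncard_pair hab] at this
  exact ⟨a, ha, b, hb, hab, this⟩

lemma ncard_setOf_inter_closure_pair_eq_empty_le_one [M.Finite] (hs : M.IsSimple)
    (hrank : M.RankEq 3) (hU : ¬ M.HasUnifRestriction 3 5) (he : e ∈ M.E) (hSE : S ⊆ M.E)
    (heS : e ∉ S) (hS : ∀ x ∈ S, ∀ y ∈ S, x ≠ y → M.Indep {e, x, y})
    (heL : e ∉ M.closure {a, b}) (hL3 : 3 ≤ (M.closure {a, b}).ncard) :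
    {x ∈ S | M.closure {a, b} ∩ M.closure {e, x} = ∅}.ncard ≤ 1 := by
  refine (ncard_le_one ((M.ground_finite.subset hSE).subset (sep_subset _ _))).2
    fun q ⟨hq, hqL⟩ q' ⟨hq', hq'L⟩ ↦ by_contra fun hqq' ↦ ?_
  have hind := hS q hq q' hq' hqq'
  rw [Set.pair_comm, Set.insert_comm] at hind
  have hq'eq : q' ∉ M.closure {e, q} := hind.notMem_closure_of_insert
    (by rintro (h | h); exacts [heS (h ▸ hq'), hqq' h.symm])
  have hqL' := notMem_of_inter_closure_pair_eq_empty (hSE hq) hqL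
  have hcount := ncard_closure_pair_le_of_triangle hs hrank hU he (hSE hq) (hSE hq')
    (fun h ↦ heS (h ▸ hq)) hq'eq heL hqL' (notMem_of_inter_closure_pair_eq_empty (hSE hq') hq'L)
  have hqq'L := hs.ncard_inter_closure_pair_le_one (v := q') (hSE hq) hqL'
  rw [hqL, hq'L, ncard_empty] at hcount
  omega

lemma exists_isLine_union_of_five_le_ncard [M.Finite] (hs : M.IsSimple) (hrank : M.RankEq 3)
    (hU : ¬ M.HasUnifRestriction 3 5) (ha : a ∈ M.E) (he : e ∈ M.E) (hea : e ≠ a)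
    (heL : e ∉ M.closure {a, b}) (hL5 : 5 ≤ (M.closure {a, b}).ncard) :
    ∃ L₂, M.IsLine L₂ ∧ M.E = M.closure {a, b} ∪ L₂ := by
  by_cases hv : ∃ v ∈ M.E, v ∉ M.closure {a, b} ∧ e ≠ v
  · obtain ⟨v, hv, hvL, hev⟩ := hv
    refine ⟨_, hs.isLine_closure_pair he hv hev,
      ground_eq_union_of_ncard_inter_add_three_lt hs hrank hU he hv hev heL hvL ?_⟩
    have := hs.ncard_inter_closure_pair_le_one (v := v) he heL
    omega
  · push Not at hv
    refine ⟨_, hs.isLine_closure_pair he ha hea,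
      (union_subset (M.closure_subset_ground _) (M.closure_subset_ground _)).antisymm'
        fun y hy ↦ (em (y ∈ M.closure {a, b})).imp id fun hyL ↦ ?_⟩
    rw [← hv y hy hyL]
    exact M.mem_closure_of_mem' (mem_insert e {a})

lemma exists_isLine_union_of_pencil [M.Finite] (hs : M.IsSimple) (hrank : M.RankEq 3)
    (hU : ¬ M.HasUnifRestriction 3 5) (he : e ∈ M.E) (hSE : S ⊆ M.E) (heS : e ∉ S)
    (hS5 : S.ncard = 5) (hS : ∀ x ∈ S, ∀ y ∈ S, x ≠ y → M.Indep {e, x, y}) :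
    ∃ L₁ L₂ : Set α, M.IsLine L₁ ∧ M.IsLine L₂ ∧ M.E = L₁ ∪ L₂ := by
  obtain ⟨a, ha, b, hb, hab, hL3⟩ := exists_three_le_ncard_closure_pair hs hrank hU hSE hS5
  have heL : e ∉ M.closure {a, b} := (hS a ha b hb hab).notMem_closure_of_insert
    (by rintro (rfl | rfl) <;> contradiction)
  have hU_le := ncard_setOf_inter_closure_pair_eq_empty_le_one hs hrank hU he hSE heS hS heL hL3
  set U := {x ∈ S | M.closure {a, b} ∩ M.closure {e, x} = ∅}
  have hLU : 5 ≤ (M.closure {a, b}).ncard + U.ncard := by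
    have hSU := ncard_le_ncard_of_inter_closure_pair_nonempty hs he heL
      (M.ground_finite.subset (M.closure_subset_ground _)) (sdiff_subset.trans hSE)
      (fun h ↦ heS h.1) (fun x hx y hy ↦ hS x hx.1 y hy.1)
      (fun x hx ↦ nonempty_iff_ne_empty.2 fun h ↦ hx.2 (show x ∈ U from ⟨hx.1, h⟩))
    have := ncard_sdiff_add_ncard_of_subset (show U ⊆ S from sep_subset _ _)
      (M.ground_finite.subset hSE)
    omega
  have hLline := hs.isLine_closure_pair (hSE ha) (hSE hb) hab
  obtain hU0 | hU1 : U.ncard = 0 ∨ U.ncard = 1 := by omega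
  · obtain ⟨L₂, hL₂, hE⟩ := exists_isLine_union_of_five_le_ncard hs hrank hU (hSE ha) he
      (fun h ↦ heS (h ▸ ha)) heL (by omega)
    exact ⟨_, L₂, hLline, hL₂, hE⟩
  · obtain ⟨x, hx⟩ := ncard_eq_one.1 hU1
    have hxU : x ∈ U := hx ▸ rfl
    have hex : e ≠ x := fun h ↦ heS (h ▸ hxU.1)
    refine ⟨_, _, hLline, hs.isLine_closure_pair he (hSE hxU.1) hex,
      ground_eq_union_of_ncard_inter_add_three_lt hs hrank hU he (hSE hxU.1) hex heL
        (notMem_of_inter_closure_pair_eq_empty (hSE hxU.1) hxU.2) ?_⟩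
    rw [hxU.2, ncard_empty]
    omega

lemma IsUnif.indep_iff {N : Matroid α} {s t : ℕ} (hN : N.IsUnif s t) (hst : s ≤ t) :
    N.Indep I ↔ I ⊆ N.E ∧ I.ncard ≤ s := by
  obtain ⟨hfin, hcard, hbase⟩ := hN
  refine ⟨fun hI ↦ ?_, fun ⟨hIE, hIs⟩ ↦ ?_⟩
  · obtain ⟨B, hB, hIB⟩ := hI.exists_isBase_superset
    obtain ⟨hBE, hBs⟩ := (hbase B).1 hB
    exact ⟨hIB.trans hBE, hBs ▸ ncard_le_ncard hIB (hfin.subset hBE)⟩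
  · obtain ⟨B, hIB, hBE, hBs⟩ := exists_subsuperset_card_eq hIE hIs (hcard ▸ hst)
    exact ((hbase B).2 ⟨hBE, hBs⟩).indep.subset hIB

-- The minor is `(M ／ J) ↾ A` for a basis `J` of the contracted set.
lemma HasUnifMinor.exists_indep_union_iff (h : M.HasUnifMinor 2 5) :
    ∃ A J, A ⊆ M.E ∧ A.ncard = 5 ∧ M.Indep J ∧ Disjoint A J ∧
      ∀ I ⊆ A, M.Indep (I ∪ J) ↔ I.ncard ≤ 2 := by
  obtain ⟨N, ⟨C, D, -, -, -, rfl⟩, hN⟩ := h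
  obtain ⟨J, hJ⟩ := M.exists_isBasis' C
  have hAC : Disjoint ((M.con C).del D).E C := disjoint_sdiff_left.mono_left sdiff_subset
  refine ⟨_, J, sdiff_subset.trans sdiff_subset, hN.2.1, hJ.indep, hAC.mono_right hJ.subset,
    fun I hIA ↦ ?_⟩
  have hcon : (M.con C).Indep I ↔ M.Indep (I ∪ J) := by
    rw [show M.con C = M ／ C from rfl, hJ.contract_indep_iff,
      and_iff_left (hAC.mono_left hIA).symm]
  have hdel : ((M.con C).del D).Indep I ↔ (M.con C).Indep I :=
    restrict_indep_iff.trans (and_iff_left hIA)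
  rw [← hcon, ← hdel, hN.indep_iff (by norm_num)]
  exact and_iff_right hIA

lemma exists_pencil_of_hasUnifMinor [M.Finite] (hs : M.IsSimple) (hrank : M.RankEq 3)
    (h : M.HasUnifMinor 2 5) : ∃ e ∈ M.E, ∃ S ⊆ M.E, e ∉ S ∧ S.ncard = 5 ∧
      ∀ x ∈ S, ∀ y ∈ S, x ≠ y → M.Indep {e, x, y} := by
  obtain ⟨A, J, hAE, hA5, hJ, hAJ, hind⟩ := h.exists_indep_union_iff
  have hpair : ∀ x ∈ A, ∀ y ∈ A, x ≠ y → M.Indep ({x, y} ∪ J) := fun x hx y hy hxy ↦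
    (hind _ (pair_subset hx hy)).2 (ncard_pair hxy).le
  obtain ⟨x₀, y₀, hx₀, hy₀, hxy₀⟩ :=
    (one_lt_ncard_iff (M.ground_finite.subset hAE)).1 (by omega)
  have hJfin : J.Finite := M.ground_finite.subset hJ.subset_ground
  have hJ1 : J.ncard ≤ 1 := by
    have := hrank.ncard_le_of_indep (hpair x₀ hx₀ y₀ hy₀ hxy₀)
    rw [ncard_union_eq (hAJ.mono_left (pair_subset hx₀ hy₀)) (toFinite _) hJfin,
      ncard_pair hxy₀] at this
    omega
  obtain rfl | ⟨e, rfl⟩ := (ncard_le_one_iff_eq hJfin).1 hJ1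
  · have hAL : A ⊆ M.closure {x₀, y₀} := fun z hz ↦ by
      by_cases hz' : z ∈ ({x₀, y₀} : Set α)
      · exact M.subset_closure _ (pair_subset (hAE hx₀) (hAE hy₀)) hz'
      refine hs.mem_closure_pair_of_not_indep (hAE hx₀) (hAE hy₀) hxy₀ (hAE hz) fun hi ↦ ?_
      have := (hind _ (insert_subset hz (pair_subset hx₀ hy₀))).1 (by rwa [union_empty])
      rw [ncard_insert_of_notMem hz', ncard_pair hxy₀] at this
      omega
    obtain ⟨e, he, heL⟩ := hrank.exists_notMem_closure_pair x₀ y₀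
    refine ⟨e, he, A, hAE, fun heA ↦ heL (hAL heA), hA5, fun x hx y hy hxy ↦ ?_⟩
    rw [← closure_pair_eq_of_mem_closure_pair (hs.2 x (hAE hx) y (hAE hy) hxy) hxy (hAL hx)
      (hAL hy)] at heL
    exact hs.indep_insert_pair (hAE hx) (hAE hy) hxy he heL
  · refine ⟨e, hJ.subset_ground rfl, A, hAE, disjoint_singleton_right.1 hAJ, hA5,
      fun x hx y hy hxy ↦ ?_⟩
    simpa [union_singleton] using hpair x hx y hy hxy

end Matroid

/-- A simple rank-3 matroid with no `U_{3,5}`-restriction either has no `U_{2,5}`-minor or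
is the union of two lines. -/
theorem unif_35_restriction_free_structure (M : Matroid α)
    (hfin : M.E.Finite) (hsimple : M.IsSimple) (hrank : M.RankEq 3)
    (hU35 : ¬ M.HasUnifRestriction 3 5) :
    (¬ M.HasUnifMinor 2 5) ∨
      ∃ L₁ L₂ : Set α, M.IsLine L₁ ∧ M.IsLine L₂ ∧ M.E = L₁ ∪ L₂ := by
  have : M.Finite := ⟨hfin⟩
  refine (em' (M.HasUnifMinor 2 5)).imp_right fun hminor ↦ ?_
  obtain ⟨e, he, S, hSE, heS, hS5, hS⟩ :=
    Matroid.exists_pencil_of_hasUnifMinor hsimple hrank hminor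
  exact Matroid.exists_isLine_union_of_pencil hsimple hrank hU35 he hSE heS hS5 hS
end

section
/- For every integer m ≥ 2 and every n divisible by m, there exists an n-element simple rank-3 matroid with no U_{3,2m+1}-restriction whose number of bases equals binom(n,3) - m·binom(n/m,3). Consequently binom(n,3) - m·binom(n/m,3) = (1 - 1/m²)·binom(n,3) + o(n³). -/
open Matroid Set Filter

variable {α : Type*}

/-!
Number the points `0, …, mk - 1`, put `x` on the line `x / k`, and call three points dependent
exactly when they are collinear. This is a matroid: if `I` is a pair and `J` a non-collinear
triple, some `e ∈ J \ I` leaves `insert e I` non-collinear, since otherwise `I` and every point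
of `J \ I` would lie on one line. Its bases are the `C(mk, 3) - m C(k, 3)` non-collinear
triples, and by pigeonhole any `2m + 1` points contain three on one of the `m` lines. Since
`C(n, 3) = n(n - 1)(n - 2)/6`, the difference between the count and `(1 - 1/m²) C(mk, 3)` is
`O(k²)`.
-/

theorem Nat.cast_choose_three {K : Type*} [Field K] [CharZero K] (a : ℕ) :
    (a.choose 3 : K) = a * (a - 1) * (a - 2) / 6 := by
  simp [Nat.cast_choose_eq_descPochhammer_div, descPochhammer_succ_right, Nat.factorial]

variable {β : Type*} {f : α → β}

namespace Set

theorem exists_not_subsingleton_image_insert {I J : Set α} (hI : I.Nonempty)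
    (hJI : (J \ I).Nonempty) (hJ : ¬ (f '' J).Subsingleton) :
    ∃ e ∈ J \ I, ¬ (f '' insert e I).Subsingleton := by
  by_contra! h
  obtain ⟨a, ha⟩ := hI
  obtain ⟨e₀, he₀⟩ := hJI
  have hconst : ∀ x ∈ J, f x = f a := by
    intro x hx
    by_cases hxI : x ∈ I
    · exact h e₀ he₀ (mem_image_of_mem f (mem_insert_of_mem _ hxI))
        (mem_image_of_mem f (mem_insert_of_mem _ ha))
    · exact h x ⟨hx, hxI⟩ (mem_image_of_mem f (mem_insert x I))
        (mem_image_of_mem f (mem_insert_of_mem _ ha))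
  exact hJ (subsingleton_singleton.anti (image_subset_iff.2 hconst))

theorem exists_ncard_eq_three_subsingleton_image {X : Set α} (hX : X.Finite) {t : Finset β}
    (ht : ∀ x ∈ X, f x ∈ t) (hXt : 2 * t.card < X.ncard) :
    ∃ T ⊆ X, T.ncard = 3 ∧ (f '' T).Subsingleton := by
  classical
  obtain ⟨X, rfl⟩ := hX.exists_finset_coe
  rw [ncard_coe_finset] at hXt
  obtain ⟨b, -, hb⟩ := Finset.exists_lt_card_fiber_of_mul_lt_card_of_maps_to (n := 2) ht
    (by rwa [mul_comm])
  obtain ⟨T, hTb, hT3⟩ := Finset.exists_subset_card_eq (show 3 ≤ _ from hb)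
  refine ⟨T, fun x hx ↦ (Finset.mem_filter.1 (hTb hx)).1, by rw [ncard_coe_finset, hT3], ?_⟩
  exact subsingleton_singleton.anti
    (image_subset_iff.2 fun x hx ↦ (Finset.mem_filter.1 (hTb hx)).2)

end Set

namespace Finset

variable {E : Finset α}

theorem exists_ncard_eq_three_not_subsingleton_image (h3 : 3 ≤ E.card)
    (hf : ¬ (f '' E).Subsingleton) :
    ∃ T ⊆ (E : Set α), T.ncard = 3 ∧ ¬ (f '' T).Subsingleton := by
  obtain ⟨a, ha, b, hb, hab⟩ : ∃ a ∈ E, ∃ b ∈ E, f a ≠ f b := by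
    simpa [Set.Subsingleton] using hf
  have hab' : a ≠ b := fun h ↦ hab (congrArg f h)
  obtain ⟨c, hcE, hc⟩ : ∃ c ∈ (E : Set α), c ∉ ({a, b} : Set α) :=
    exists_mem_notMem_of_ncard_lt_ncard (by rw [ncard_pair hab', ncard_coe_finset]; omega)
  refine ⟨{c, a, b}, Set.insert_subset hcE (Set.pair_subset ha hb), ?_, fun h ↦ hab (h ?_ ?_)⟩
  · rw [ncard_insert_of_notMem hc, ncard_pair hab']
  · exact Set.mem_image_of_mem f (by simp)
  · exact Set.mem_image_of_mem f (by simp)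

open Classical in
theorem card_filter_powersetCard_subsingleton_image [DecidableEq β] {r : ℕ} (hr : r ≠ 0)
    {t : Finset β} (ht : ∀ x ∈ E, f x ∈ t) :
    ((E.powersetCard r).filter fun s : Finset α ↦ (f '' ↑s).Subsingleton).card =
      ∑ b ∈ t, {x ∈ E | f x = b}.card.choose r := by
  have hunion : ((E.powersetCard r).filter fun s : Finset α ↦ (f '' ↑s).Subsingleton) =
      t.biUnion fun b ↦ {x ∈ E | f x = b}.powersetCard r := by
    ext s
    simp only [mem_filter, mem_powersetCard, mem_biUnion]
    constructor
    · rintro ⟨⟨hsE, hsr⟩, hsf⟩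
      obtain ⟨a, ha⟩ := card_pos.1 (Nat.pos_of_ne_zero (hsr ▸ hr))
      exact ⟨f a, ht a (hsE ha), fun x hx ↦ mem_filter.2
        ⟨hsE hx, hsf (Set.mem_image_of_mem f hx) (Set.mem_image_of_mem f ha)⟩, hsr⟩
    · rintro ⟨b, -, hsb, hsr⟩
      exact ⟨⟨hsb.trans (filter_subset _ _), hsr⟩, subsingleton_singleton.anti
        (Set.image_subset_iff.2 fun x hx ↦ (mem_filter.1 (hsb hx)).2)⟩
  rw [hunion, card_biUnion]
  · simp only [card_powersetCard]
  · intro b _ b' _ hbb'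
    refine disjoint_left.2 fun s hs hs' ↦ ?_
    rw [mem_powersetCard] at hs hs'
    obtain ⟨a, ha⟩ := card_pos.1 (Nat.pos_of_ne_zero (hs.2 ▸ hr))
    exact hbb' ((mem_filter.1 (hs.1 ha)).2.symm.trans (mem_filter.1 (hs'.1 ha)).2)

theorem card_filter_range_mul_div_eq {m k c : ℕ} (hc : c < m) :
    {x ∈ range (m * k) | x / k = c}.card = k := by
  rcases Nat.eq_zero_or_pos k with rfl | hk
  · simp
  have hck : c * k + k ≤ m * k := by nlinarith
  have hfibre : {x ∈ range (m * k) | x / k = c} = Ico (c * k) (c * k + k) := by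
    ext x
    simp only [mem_filter, mem_range, mem_Ico, Nat.div_eq_iff hk]
    omega
  rw [hfibre, Nat.card_Ico, Nat.add_sub_cancel_left]

theorem not_subsingleton_image_div_range {m k : ℕ} (hm : 1 < m) (hk : 0 < k) :
    ¬ ((· / k) '' (range (m * k) : Set ℕ)).Subsingleton := by
  intro h
  have hkm : k < m * k := by nlinarith
  have h01 : 0 / k = k / k :=
    h (Set.mem_image_of_mem _ (mem_range.2 (by omega))) (Set.mem_image_of_mem _ (mem_range.2 hkm))
  rw [Nat.zero_div, Nat.div_self hk] at h01
  exact zero_ne_one h01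

end Finset

namespace Matroid

/-- The rank-3 matroid on `E` whose long lines are the fibres of `f`. -/
def disjointLines (E : Finset α) (f : α → β) : Matroid α :=
  (IndepMatroid.ofFinite E.finite_toSet
    (fun I ↦ I ⊆ E ∧ I.ncard ≤ 3 ∧ (I.ncard = 3 → ¬ (f '' I).Subsingleton))
    (by simp)
    (by
      rintro I J ⟨hJE, hJ3, hJf⟩ hIJ
      have hJfin := E.finite_toSet.subset hJE
      have hIJcard := ncard_le_ncard hIJ hJfin
      refine ⟨hIJ.trans hJE, hIJcard.trans hJ3, fun hI3 ↦ ?_⟩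
      rw [eq_of_subset_of_ncard_le hIJ (by omega) hJfin]
      exact hJf (by omega))
    (by
      rintro I J ⟨hIE, hI3, -⟩ ⟨hJE, hJ3, hJf⟩ hIJ
      have hIfin := E.finite_toSet.subset hIE
      obtain ⟨e₀, he₀J, he₀I⟩ := exists_mem_notMem_of_ncard_lt_ncard hIJ hIfin
      have hcard_insert : ∀ e ∉ I, (insert e I).ncard = I.ncard + 1 :=
        fun e he ↦ ncard_insert_of_notMem he hIfin
      by_cases hI1 : I.ncard ≤ 1
      · refine ⟨e₀, he₀J, he₀I, insert_subset (hJE he₀J) hIE, ?_, fun h ↦ ?_⟩ <;>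
          rw [hcard_insert e₀ he₀I] at * <;> omega
      obtain ⟨e, ⟨heJ, heI⟩, he⟩ := exists_not_subsingleton_image_insert
        (nonempty_of_ncard_ne_zero (by omega)) ⟨e₀, he₀J, he₀I⟩ (hJf (by omega))
      exact ⟨e, heJ, heI, insert_subset (hJE heJ) hIE, by rw [hcard_insert e heI]; omega,
        fun _ ↦ he⟩)
    (fun _ hI ↦ hI.1)).matroid

variable {E : Finset α} {I B : Set α}

@[simp] theorem disjointLines_ground : (disjointLines E f).E = E := rfl

theorem disjointLines_indep_iff : (disjointLines E f).Indep I ↔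
    I ⊆ E ∧ I.ncard ≤ 3 ∧ (I.ncard = 3 → ¬ (f '' I).Subsingleton) := Iff.rfl

theorem disjointLines_indep_of_ncard_le_two (hIE : I ⊆ E) (hI : I.ncard ≤ 2) :
    (disjointLines E f).Indep I :=
  disjointLines_indep_iff.2 ⟨hIE, by omega, by omega⟩

theorem disjointLines_isSimple : (disjointLines E f).IsSimple :=
  ⟨fun _ he ↦ disjointLines_indep_of_ncard_le_two (singleton_subset_iff.2 he) (by simp),
    fun _ he _ he' hne ↦
      disjointLines_indep_of_ncard_le_two (pair_subset he he') (by rw [ncard_pair hne])⟩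

theorem disjointLines_isBase_of_indep_of_ncard_eq (hI : (disjointLines E f).Indep I)
    (hI3 : I.ncard = 3) : (disjointLines E f).IsBase I := by
  refine hI.isBase_of_maximal fun J hJ hIJ ↦ ?_
  obtain ⟨hJE, hJ3, -⟩ := disjointLines_indep_iff.1 hJ
  exact eq_of_subset_of_ncard_le hIJ (by omega) (E.finite_toSet.subset hJE)

theorem disjointLines_isBase_iff (h3 : 3 ≤ E.card) (hf : ¬ (f '' E).Subsingleton) :
    (disjointLines E f).IsBase B ↔ B ⊆ E ∧ B.ncard = 3 ∧ ¬ (f '' B).Subsingleton := by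
  obtain ⟨T, hTE, hT3, hTf⟩ := E.exists_ncard_eq_three_not_subsingleton_image h3 hf
  have hT : (disjointLines E f).IsBase T := disjointLines_isBase_of_indep_of_ncard_eq
    (disjointLines_indep_iff.2 ⟨hTE, hT3.le, fun _ ↦ hTf⟩) hT3
  constructor
  · intro hB
    obtain ⟨hBE, -, hBf⟩ := disjointLines_indep_iff.1 hB.indep
    have hB3 : B.ncard = 3 := hT3 ▸ hB.ncard_eq_ncard_of_isBase hT
    exact ⟨hBE, hB3, hBf hB3⟩
  · rintro ⟨hBE, hB3, hBf⟩
    exact disjointLines_isBase_of_indep_of_ncard_eq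
      (disjointLines_indep_iff.2 ⟨hBE, hB3.le, fun _ ↦ hBf⟩) hB3

theorem disjointLines_rankEq_three (h3 : 3 ≤ E.card) (hf : ¬ (f '' E).Subsingleton) :
    (disjointLines E f).RankEq 3 := by
  obtain ⟨T, hTE, hT3, hTf⟩ := E.exists_ncard_eq_three_not_subsingleton_image h3 hf
  exact ⟨T, (disjointLines_isBase_iff h3 hf).2 ⟨hTE, hT3, hTf⟩, hT3⟩

theorem disjointLines_not_hasUnifRestriction {t : Finset β} (ht : ∀ x ∈ E, f x ∈ t) {n : ℕ}
    (hn : 2 * t.card < n) : ¬ (disjointLines E f).HasUnifRestriction 3 n := by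
  rintro ⟨X, hXE, -, hXn, hXbases⟩
  rw [restrict_ground_eq] at hXn
  obtain ⟨T, hTX, hT3, hTf⟩ := exists_ncard_eq_three_subsingleton_image
    (E.finite_toSet.subset hXE) (fun x hx ↦ ht x (hXE hx)) (hXn ▸ hn)
  have hT := restrict_indep_iff.1 ((hXbases T).2 ⟨hTX, hT3⟩).indep
  exact (disjointLines_indep_iff.1 hT.1).2.2 hT3 hTf

theorem disjointLines_numBases [DecidableEq β] (h3 : 3 ≤ E.card) (hf : ¬ (f '' E).Subsingleton)
    {t : Finset β} (ht : ∀ x ∈ E, f x ∈ t) :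
    (disjointLines E f).numBases =
      E.card.choose 3 - ∑ b ∈ t, {x ∈ E | f x = b}.card.choose 3 := by
  classical
  have hbases : {B | (disjointLines E f).IsBase B} =
      (fun s : Finset α ↦ (s : Set α)) ''
        ↑((E.powersetCard 3).filter fun s : Finset α ↦ ¬ (f '' ↑s).Subsingleton) := by
    ext B
    rw [mem_ofPred_eq, disjointLines_isBase_iff h3 hf]
    constructor
    · rintro ⟨hBE, hB3, hBf⟩
      obtain ⟨s, rfl⟩ := (E.finite_toSet.subset hBE).exists_finset_coe
      rw [ncard_coe_finset] at hB3
      refine ⟨s, Finset.mem_filter.2 ⟨Finset.mem_powersetCard.2 ⟨?_, hB3⟩, hBf⟩, rfl⟩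
      simpa using hBE
    · rintro ⟨s, hs, rfl⟩
      obtain ⟨hs, hsf⟩ := Finset.mem_filter.1 hs
      obtain ⟨hsE, hs3⟩ := Finset.mem_powersetCard.1 hs
      exact ⟨by simpa using hsE, by rw [ncard_coe_finset, hs3], hsf⟩
  have hsplit := Finset.card_filter_add_card_filter_not (s := E.powersetCard 3)
    (fun s : Finset α ↦ (f '' ↑s).Subsingleton)
  rw [E.card_filter_powersetCard_subsingleton_image three_ne_zero ht, Finset.card_powersetCard]
    at hsplit
  rw [numBases, hbases, ncard_image_of_injective _ Finset.coe_injective, ncard_coe_finset]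
  omega

end Matroid

open Topology in
theorem tendsto_choose_three_sub_mul_choose_three_div_cube (m : ℕ) :
    Tendsto
      (fun k : ℕ =>
        ((((m * k).choose 3 : ℝ) - (m : ℝ) * (k.choose 3 : ℝ)) -
            (1 - 1 / (m : ℝ) ^ 2) * ((m * k).choose 3 : ℝ)) / ((m : ℝ) * (k : ℝ)) ^ 3)
      atTop (𝓝 0) := by
  have hinv : Tendsto (fun k : ℕ ↦ (k : ℝ)⁻¹) atTop (𝓝 0) :=
    tendsto_inv_atTop_zero.comp tendsto_natCast_atTop_atTop
  have hlim := (hinv.const_mul ((m - 1) / (2 * m ^ 3) : ℝ)).add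
    ((hinv.pow 2).const_mul ((1 - m ^ 2) / (3 * m ^ 4) : ℝ))
  rw [mul_zero, zero_pow two_ne_zero, mul_zero, add_zero] at hlim
  refine hlim.congr' ?_
  filter_upwards [eventually_ne_atTop 0] with k hk
  rcases eq_or_ne m 0 with rfl | hm
  · simp
  rw [Nat.cast_choose_three, Nat.cast_choose_three, Nat.cast_mul]
  field_simp
  ring

/-- For every `m ≥ 2` and every `n ≥ 3` divisible by `m`, there is an `n`-element simple
rank-3 matroid with no `U_{3,2m+1}`-restriction having exactly
`binom(n,3) - m·binom(n/m,3)` bases; moreover this count is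
`(1 - 1/m²)·binom(n,3) + o(n³)` along multiples `n = m·k`. -/
theorem unif_3_odd_restriction_free_lower_bound (m : ℕ) (hm : 2 ≤ m) :
    (∀ n : ℕ, 3 ≤ n → m ∣ n →
      ∃ M : Matroid ℕ, M.E.Finite ∧ M.E.ncard = n ∧ M.IsSimple ∧ M.RankEq 3 ∧
        ¬ M.HasUnifRestriction 3 (2 * m + 1) ∧
        M.numBases = n.choose 3 - m * (n / m).choose 3) ∧
    Filter.Tendsto
      (fun k : ℕ =>
        ((((m * k).choose 3 : ℝ) - (m : ℝ) * (k.choose 3 : ℝ)) -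
            (1 - 1 / (m : ℝ) ^ 2) * ((m * k).choose 3 : ℝ)) / ((m : ℝ) * (k : ℝ)) ^ 3)
      Filter.atTop (nhds 0) := by
  refine ⟨?_, tendsto_choose_three_sub_mul_choose_three_div_cube m⟩
  rintro n hn ⟨k, rfl⟩
  have hk : 0 < k := Nat.pos_of_ne_zero fun hk ↦ by simp [hk] at hn
  have hE : (Finset.range (m * k)).card = m * k := Finset.card_range _
  have h3 : 3 ≤ (Finset.range (m * k)).card := by rwa [hE]
  have hf := Finset.not_subsingleton_image_div_range hm hk
  have hmaps : ∀ x ∈ Finset.range (m * k), x / k ∈ Finset.range m := fun x hx ↦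
    Finset.mem_range.2 ((Nat.div_lt_iff_lt_mul hk).2 (Finset.mem_range.1 hx))
  refine ⟨disjointLines (Finset.range (m * k)) (· / k), Finset.finite_toSet _,
    by rw [disjointLines_ground, ncard_coe_finset, hE], disjointLines_isSimple,
    disjointLines_rankEq_three h3 hf,
    disjointLines_not_hasUnifRestriction hmaps (by rw [Finset.card_range]; omega), ?_⟩
  rw [disjointLines_numBases h3 hf hmaps, hE, Nat.mul_div_cancel_left k (by omega)]
  rw [Finset.sum_congr rfl fun c hc ↦ by
      rw [Finset.card_filter_range_mul_div_eq (Finset.mem_range.1 hc)],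
    Finset.sum_const, Finset.card_range, smul_eq_mul]
end
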